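/- arXiv:2503.05343 — 3 statements merged into one kernel-verified Lean document; each statement's English description precedes it below -/
import Mathlib

section
/- Let p be an orthogonal partition of 2n+1 whose smallest part equals 1 with multiplicity 1 and all of whose other parts are even (i.e., in the notation b_1 > ⋯ > b_r with multiplicities a_1, …, a_r, one has a_r = b_r = 1 and b_i even for 1 ≤ i ≤ r−1). Then ([p_1 p_1 (2n*)]^t)_{Sp_{2n}} = (p^-)_{Sp_{2n}}, and consequently [p_1 p_1 (2n*)]^{Sp_{2n}} = ((p^t)^-)_{Sp_{2n}}. (Theorem 4.2(1)(i) of the paper.) -/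
/-!  Basic combinatorics of partitions: transpose, dominance order,
symplectic/orthogonal partitions, collapses and expansions, and the
dimension formulas for nilpotent orbits. -/

/-- `p` is a partition of `N`: a multiset of positive integers summing to `N`. -/
def IsPartitionOf (N : ℕ) (p : Multiset ℕ) : Prop := p.sum = N ∧ 0 ∉ p

/-- Sum of the `k` largest parts of `p`:
`Σ_{j ≥ 1} min k #{i : p_i ≥ j}`. -/
def psum (p : Multiset ℕ) (k : ℕ) : ℕ :=
  ((Multiset.range p.sum).map (fun j => min k (p.countP (fun a => j + 1 ≤ a)))).sum

/-- Dominance order on partitions: `DomLE p q` means `p ≤ q`, i.e. for every `k`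
the sum of the `k` largest parts of `p` is at most that of `q`. -/
def DomLE (p q : Multiset ℕ) : Prop := ∀ k, psum p k ≤ psum q k

/-- The transpose of a partition: its `j`-th part is `#{i : p_i ≥ j}`. -/
def transpose (p : Multiset ℕ) : Multiset ℕ :=
  (((Multiset.range p.sum).map (fun j => p.countP (fun a => j + 1 ≤ a))).filter (0 < ·))

/-- A partition is symplectic if every odd part occurs with even multiplicity. -/
def IsSymplectic (p : Multiset ℕ) : Prop := ∀ a, Odd a → Even (p.count a)

/-- A partition is orthogonal if every even part occurs with even multiplicity. -/
def IsOrthogonal (p : Multiset ℕ) : Prop := ∀ a, Even a → Even (p.count a)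

/-- `q` is the `P`-collapse of `p` (as partitions of `N`): the largest partition of `N`
satisfying `P` which is `≤ p` in the dominance order. -/
def IsCollapseOf (P : Multiset ℕ → Prop) (N : ℕ) (p q : Multiset ℕ) : Prop :=
  IsPartitionOf N q ∧ P q ∧ DomLE q p ∧
    ∀ q', IsPartitionOf N q' → P q' → DomLE q' p → DomLE q' q

open Classical in
noncomputable def collapseOf (P : Multiset ℕ → Prop) (N : ℕ) (p : Multiset ℕ) : Multiset ℕ :=
  if h : ∃ q, IsCollapseOf P N p q then h.choose else 0

/-- The symplectic collapse `p_{Sp_N}` of a partition `p` of `N` (`N` even). -/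
noncomputable def sympCollapse (N : ℕ) (p : Multiset ℕ) : Multiset ℕ :=
  collapseOf IsSymplectic N p

/-- The orthogonal collapse `p_{SO_N}` of a partition `p` of `N`. -/
noncomputable def orthCollapse (N : ℕ) (p : Multiset ℕ) : Multiset ℕ :=
  collapseOf IsOrthogonal N p

/-- A symplectic partition `p` of `N` is special if `(((p^t)_{Sp_N})^t)_{Sp_N} = p`. -/
def IsSpecialSymp (N : ℕ) (p : Multiset ℕ) : Prop :=
  sympCollapse N (transpose (sympCollapse N (transpose p))) = p

/-- An orthogonal partition `p` of `N` is special if `(((p^t)_{SO_N})^t)_{SO_N} = p`. -/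
def IsSpecialOrth (N : ℕ) (p : Multiset ℕ) : Prop :=
  orthCollapse N (transpose (orthCollapse N (transpose p))) = p

/-- `q` is the `(P, Sp)`-expansion of `p`: the smallest partition of `N` satisfying
`P` and the speciality predicate `Sp` which is `≥ p` in the dominance order. -/
def IsExpansionOf (P Sp : Multiset ℕ → Prop) (N : ℕ) (p q : Multiset ℕ) : Prop :=
  IsPartitionOf N q ∧ P q ∧ Sp q ∧ DomLE p q ∧
    ∀ q', IsPartitionOf N q' → P q' → Sp q' → DomLE p q' → DomLE q q'

open Classical in
noncomputable def expansionOf (P Sp : Multiset ℕ → Prop) (N : ℕ) (p : Multiset ℕ) :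
    Multiset ℕ :=
  if h : ∃ q, IsExpansionOf P Sp N p q then h.choose else 0

/-- The symplectic expansion `p^{Sp_N}`: the smallest special symplectic partition of `N`
which is `≥ p` in the dominance order. -/
noncomputable def sympExpansion (N : ℕ) (p : Multiset ℕ) : Multiset ℕ :=
  expansionOf IsSymplectic (IsSpecialSymp N) N p

/-- The orthogonal expansion `p^{SO_N}`: the smallest special orthogonal partition of `N`
which is `≥ p` in the dominance order. -/
noncomputable def orthExpansion (N : ℕ) (p : Multiset ℕ) : Multiset ℕ :=
  expansionOf IsOrthogonal (IsSpecialOrth N) N p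

/-- The smallest part of a (nonempty) partition. -/
def minPart (p : Multiset ℕ) : ℕ := p.sum - psum p (Multiset.card p - 1)

/-- The largest part of a partition. -/
def maxPart (p : Multiset ℕ) : ℕ := psum p 1

/-- `p^-`: decrease the smallest part of `p` by `1` (deleting it if it becomes `0`). -/
def pMinus (p : Multiset ℕ) : Multiset ℕ :=
  ((minPart p - 1) ::ₘ p.erase (minPart p)).filter (0 < ·)

/-- `p^+`: increase the largest part of `p` by `1`. -/
def pPlus (p : Multiset ℕ) : Multiset ℕ :=
  (maxPart p + 1) ::ₘ p.erase (maxPart p)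

/-- `dim_{sp_{2n}}(p) = 2n² + n − ½(Σ_i ((p^t)_i)² + #{i : p_i odd})`,
the dimension of the nilpotent orbit of `sp_{2n}` attached to a symplectic
partition `p` of `2n`. -/
def dimSp (n : ℕ) (p : Multiset ℕ) : ℚ :=
  (2 * (n : ℚ) ^ 2 + n) -
    (((transpose p).map (fun x => (x : ℚ) ^ 2)).sum + (p.countP (Odd ·) : ℚ)) / 2

/-- `dim_{so_m}(p) = m(m−1)/2 − ½(Σ_i ((p^t)_i)² − #{i : p_i odd})`,
the dimension of the nilpotent orbit of `so_m` attached to an orthogonal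
partition `p` of `m`. -/
def dimSO (m : ℕ) (p : Multiset ℕ) : ℚ :=
  ((m : ℚ) * ((m : ℚ) - 1)) / 2 -
    (((transpose p).map (fun x => (x : ℚ) ^ 2)).sum - (p.countP (Odd ·) : ℚ)) / 2

/-- The partition `p_1 = [⌊b_1/2⌋^{a_1} ⋯ ⌊b_r/2⌋^{a_r}]^t` attached to
`p = [b_1^{a_1} ⋯ b_r^{a_r}]` (zero entries discarded). -/
def pOne (p : Multiset ℕ) : Multiset ℕ := transpose (p.map (· / 2))

/-- `n* = ⌊(Σ_{i : b_i odd} a_i)/2⌋`, i.e. half the number of odd parts. -/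
def nStar (p : Multiset ℕ) : ℕ := p.countP (Odd ·) / 2

/-- `[q q (m)]`: two copies of `q` together with one extra part `m`
(no extra part when `m = 0`). -/
def qqm (q : Multiset ℕ) (m : ℕ) : Multiset ℕ :=
  if m = 0 then q + q else m ::ₘ (q + q)


namespace Aux41

/-- number of parts of `s` that are `≥ j+1`. -/
def col (s : Multiset ℕ) (j : ℕ) : ℕ := s.countP (fun a => j + 1 ≤ a)

/-- the `k`-th largest part of `s` (`1`-indexed). -/
def nth (s : Multiset ℕ) (k : ℕ) : ℕ :=
  ((Finset.range s.sum).filter (fun j => k ≤ col s j)).card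

lemma col_mono (s : Multiset ℕ) {j j' : ℕ} (h : j ≤ j') : col s j' ≤ col s j := by
  induction s using Multiset.induction with
  | empty => simp [col]
  | cons a s ih =>
    simp only [col, Multiset.countP_cons] at *
    split_ifs <;> omega

lemma col_le_sum (s : Multiset ℕ) (j : ℕ) : col s j ≤ s.sum := by
  induction s using Multiset.induction with
  | empty => simp [col]
  | cons a s ih =>
    simp only [col, Multiset.countP_cons, Multiset.sum_cons] at *
    split_ifs <;> omega

lemma col_eq_zero {s : Multiset ℕ} {j : ℕ} (h : s.sum ≤ j) : col s j = 0 := by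
  induction s using Multiset.induction with
  | empty => simp [col]
  | cons a s ih =>
    simp only [col, Multiset.countP_cons, Multiset.sum_cons] at *
    have h1 : s.sum ≤ j := by omega
    have h2 : a ≤ j := by
      have := s.sum.zero_le; omega
    rw [ih h1]
    split_ifs <;> omega

lemma col_succ (s : Multiset ℕ) (j : ℕ) :
    col s j = s.count (j + 1) + col s (j + 1) := by
  induction s using Multiset.induction with
  | empty => simp [col]
  | cons a s ih =>
    simp only [col, Multiset.countP_cons, Multiset.count_cons] at *
    split_ifs <;> omega

lemma col_add (s u : Multiset ℕ) (j : ℕ) : col (s + u) j = col s j + col u j := by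
  simp [col, Multiset.countP_add]

lemma card_le_sum {s : Multiset ℕ} (h0 : 0 ∉ s) : Multiset.card s ≤ s.sum := by
  induction s using Multiset.induction with
  | empty => simp
  | cons a s ih =>
    simp only [Multiset.card_cons, Multiset.sum_cons]
    have ha : a ≠ 0 := fun h => h0 (h ▸ Multiset.mem_cons_self a s)
    have := ih (fun h => h0 (Multiset.mem_cons_of_mem h))
    omega

lemma sum_range_col {s : Multiset ℕ} {N : ℕ} (h : s.sum ≤ N) :
    ∑ j ∈ Finset.range N, col s j = s.sum := by
  induction s using Multiset.induction with
  | empty => simp [col]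
  | cons a s ih =>
    simp only [Multiset.sum_cons] at *
    have hs : s.sum ≤ N := by omega
    have ha : a ≤ N := by have := s.sum.zero_le; omega
    have : ∀ j, col (a ::ₘ s) j = col s j + (if j + 1 ≤ a then 1 else 0) := by
      intro j; simp [col, Multiset.countP_cons]
    rw [Finset.sum_congr rfl (fun j _ => this j), Finset.sum_add_distrib, ih hs]
    have : ∑ j ∈ Finset.range N, (if j + 1 ≤ a then 1 else 0)
        = ((Finset.range N).filter (fun j => j + 1 ≤ a)).card := by
      rw [Finset.card_filter]
    rw [this]
    have : (Finset.range N).filter (fun j => j + 1 ≤ a) = Finset.range a := by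
      ext j
      simp only [Finset.mem_filter, Finset.mem_range]
      omega
    rw [this, Finset.card_range]
    omega

lemma psum_eq (s : Multiset ℕ) (k : ℕ) :
    psum s k = ∑ j ∈ Finset.range s.sum, min k (col s j) := rfl

lemma psum_ext (s : Multiset ℕ) (k : ℕ) {N : ℕ} (h : s.sum ≤ N) :
    psum s k = ∑ j ∈ Finset.range N, min k (col s j) := by
  rw [psum_eq]
  apply Finset.sum_subset (Finset.range_subset_range.2 h)
  intro j _ hj
  simp only [Finset.mem_range, not_lt] at hj
  rw [col_eq_zero hj]
  simp

lemma psum_zero (s : Multiset ℕ) : psum s 0 = 0 := by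
  simp [psum_eq]

lemma psum_succ (s : Multiset ℕ) (k : ℕ) :
    psum s (k + 1) = psum s k + nth s (k + 1) := by
  rw [psum_eq, psum_eq, nth, Finset.card_filter, ← Finset.sum_add_distrib]
  apply Finset.sum_congr rfl
  intro j _
  split_ifs <;> omega

lemma psum_eq_sum {s : Multiset ℕ} {k : ℕ} (h : Multiset.card s ≤ k) :
    psum s k = s.sum := by
  rw [psum_eq]
  have : ∀ j ∈ Finset.range s.sum, min k (col s j) = col s j := by
    intro j _
    have : col s j ≤ Multiset.card s := Multiset.countP_le_card _ _
    omega
  rw [Finset.sum_congr rfl this, sum_range_col le_rfl]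

lemma psum_mono_col {s u : Multiset ℕ} (h : ∀ j, col s j ≤ col u j) (k : ℕ) :
    psum s k ≤ psum u k := by
  have hM : s.sum ≤ max s.sum u.sum := le_max_left _ _
  have hM' : u.sum ≤ max s.sum u.sum := le_max_right _ _
  rw [psum_ext s k hM, psum_ext u k hM']
  exact Finset.sum_le_sum (fun j _ => by have := h j; omega)

lemma galois (s : Multiset ℕ) (x j : ℕ) :
    x + 1 ≤ nth s (j + 1) ↔ j + 1 ≤ col s x := by
  constructor
  · intro h
    by_contra hc
    push_neg at hc
    have hsub : (Finset.range s.sum).filter (fun i => j + 1 ≤ col s i) ⊆ Finset.range x := by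
      intro i hi
      simp only [Finset.mem_filter, Finset.mem_range] at *
      by_contra hxi
      push_neg at hxi
      have := col_mono s hxi
      omega
    have := Finset.card_le_card hsub
    rw [Finset.card_range] at this
    rw [nth] at h
    omega
  · intro h
    have hx : x < s.sum := by
      by_contra hc
      push_neg at hc
      rw [col_eq_zero hc] at h
      omega
    have hsub : Finset.range (x + 1) ⊆
        (Finset.range s.sum).filter (fun i => j + 1 ≤ col s i) := by
      intro i hi
      simp only [Finset.mem_filter, Finset.mem_range] at *
      exact ⟨by omega, le_trans h (col_mono s (by omega))⟩
    have := Finset.card_le_card hsub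
    rw [Finset.card_range] at this
    rw [nth]
    omega

lemma nth_antitone (s : Multiset ℕ) {k k' : ℕ} (h : k ≤ k') : nth s k' ≤ nth s k := by
  apply Finset.card_le_card
  intro i hi
  simp only [Finset.mem_filter] at *
  exact ⟨hi.1, le_trans h hi.2⟩

lemma sum_filter_pos (s : Multiset ℕ) : (s.filter (0 < ·)).sum = s.sum := by
  conv_rhs => rw [← Multiset.filter_add_not (0 < ·) s]
  rw [Multiset.sum_add]
  have : (s.filter (fun a => ¬ 0 < a)).sum = 0 := by
    apply Multiset.sum_eq_zero
    intro a ha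
    have := Multiset.of_mem_filter ha
    omega
  omega

lemma col_transpose (s : Multiset ℕ) (j : ℕ) : col (transpose s) j = nth s (j + 1) := by
  rw [transpose, col, Multiset.countP_filter]
  have : (((Multiset.range s.sum).map (fun i => s.countP (fun a => i + 1 ≤ a))).countP
      (fun a => j + 1 ≤ a ∧ 0 < a))
      = (((Multiset.range s.sum).map (fun i => col s i)).countP (fun a => j + 1 ≤ a)) := by
    apply Multiset.countP_congr rfl
    intro x _
    simp only [col, eq_iff_iff]
    constructor
    · exact fun h => h.1
    · exact fun h => ⟨h, by omega⟩
  rw [this, Multiset.countP_map, nth]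
  rfl

lemma transpose_sum (s : Multiset ℕ) : (transpose s).sum = s.sum := by
  rw [transpose, sum_filter_pos]
  have : ((Multiset.range s.sum).map (fun i => s.countP (fun a => i + 1 ≤ a))).sum
      = ∑ j ∈ Finset.range s.sum, col s j := rfl
  rw [this, sum_range_col le_rfl]

lemma zero_notMem_transpose (s : Multiset ℕ) : 0 ∉ transpose s := by
  intro h
  have := Multiset.of_mem_filter h
  omega

lemma nth_transpose {s : Multiset ℕ} (h0 : 0 ∉ s) (k : ℕ) :
    nth (transpose s) (k + 1) = col s k := by
  rw [nth, transpose_sum]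
  have : (Finset.range s.sum).filter (fun j => k + 1 ≤ col (transpose s) j)
      = (Finset.range s.sum).filter (fun j => j < col s k) := by
    apply Finset.filter_congr
    intro j _
    simp only [col_transpose, eq_iff_iff]
    constructor
    · intro h; have := (galois s k j).1 h; omega
    · intro h; exact (galois s k j).2 (by omega)
  rw [this]
  have : (Finset.range s.sum).filter (fun j => j < col s k) = Finset.range (col s k) := by
    ext j
    simp only [Finset.mem_filter, Finset.mem_range]
    have h1 : col s k ≤ Multiset.card s := Multiset.countP_le_card _ _
    have h2 := card_le_sum h0
    omega
  rw [this, Finset.card_range]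

lemma ext_col {s u : Multiset ℕ} (hs : 0 ∉ s) (hu : 0 ∉ u)
    (h : ∀ j, col s j = col u j) : s = u := by
  ext a
  cases a with
  | zero =>
    rw [Multiset.count_eq_zero.2 hs, Multiset.count_eq_zero.2 hu]
  | succ b =>
    have e1 := col_succ s b
    have e2 := col_succ u b
    have := h b
    have := h (b + 1)
    omega

lemma dom_antisymm {s u : Multiset ℕ} (hs : 0 ∉ s) (hu : 0 ∉ u)
    (h1 : DomLE s u) (h2 : DomLE u s) : s = u := by
  have hps : ∀ k, psum s k = psum u k := fun k => le_antisymm (h1 k) (h2 k)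
  have hnth : ∀ k, nth s (k + 1) = nth u (k + 1) := by
    intro k
    have e1 := psum_succ s k
    have e2 := psum_succ u k
    have := hps k
    have := hps (k + 1)
    omega
  have key : ∀ (a b : Multiset ℕ), (∀ k, nth a (k + 1) = nth b (k + 1)) →
      ∀ j, col a j ≤ col b j := by
    intro a b hab j
    rcases h' : col a j with _ | m
    · omega
    · have h1 : m + 1 ≤ col a j := by omega
      have h2 : j + 1 ≤ nth a (m + 1) := (galois a j m).2 h1
      rw [hab] at h2
      have := (galois b j m).1 h2
      omega
  apply ext_col hs hu
  intro j
  exact le_antisymm (key s u hnth j) (key u s (fun k => (hnth k).symm) j)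


lemma even_countP {s : Multiset ℕ} (pred : ℕ → Prop) [DecidablePred pred]
    (h : ∀ a, pred a → Even (s.count a)) : Even (s.countP pred) := by
  rw [Multiset.countP_eq_card_filter, ← Multiset.toFinset_sum_count_eq]
  have : 2 ∣ ∑ a ∈ (s.filter pred).toFinset, (s.filter pred).count a := by
    apply Finset.dvd_sum
    intro a ha
    rw [Multiset.count_filter]
    split_ifs with hpa
    · obtain ⟨c, hc⟩ := h a hpa
      exact ⟨c, by omega⟩
    · exact ⟨0, rfl⟩
  obtain ⟨c, hc⟩ := this
  exact ⟨c, by omega⟩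

lemma sum_mod_two (s : Multiset ℕ) : s.sum % 2 = s.countP (Odd ·) % 2 := by
  induction s using Multiset.induction with
  | empty => simp
  | cons a s ih =>
    rw [Multiset.sum_cons, Multiset.countP_cons]
    by_cases ho : Odd a
    · rw [if_pos ho]
      rw [Nat.odd_iff] at ho
      omega
    · rw [if_neg ho]
      rw [Nat.odd_iff] at ho
      omega

lemma even_sum_of_counts {s : Multiset ℕ} (h : ∀ a, Odd a → Even (s.count a)) :
    Even s.sum := by
  have h1 := sum_mod_two s
  have h2 : Even (s.countP (Odd ·)) := even_countP _ h
  rw [Nat.even_iff] at h2 ⊢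
  omega

lemma pair_sum_even (f : ℕ → ℕ) (h : ∀ i, f (2 * i) = f (2 * i + 1)) (N : ℕ) :
    Even (∑ j ∈ Finset.range (2 * N), f j) := by
  induction N with
  | zero => simp
  | succ N ih =>
    have e : 2 * (N + 1) = (2 * N + 1) + 1 := by omega
    rw [e, Finset.sum_range_succ, Finset.sum_range_succ]
    obtain ⟨c, hc⟩ := ih
    exact ⟨c + f (2 * N), by have := h N; omega⟩

lemma psum_col_eq_filter_sum (s : Multiset ℕ) (w : ℕ) :
    psum s (col s w) = (s.filter (fun a => w + 1 ≤ a)).sum := by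
  have hle : (s.filter (fun a => w + 1 ≤ a)).sum ≤ s.sum := by
    obtain ⟨u, hu⟩ := Multiset.le_iff_exists_add.1 (Multiset.filter_le (fun a => w + 1 ≤ a) s)
    have h2 : s.sum = (s.filter (fun a => w + 1 ≤ a)).sum + u.sum := by
      conv_lhs => rw [hu]
      rw [Multiset.sum_add]
    omega
  have hcol : ∀ j, col (s.filter (fun a => w + 1 ≤ a)) j = col s (max j w) := by
    intro j
    rw [col, Multiset.countP_filter]
    apply Multiset.countP_congr rfl
    intro x _
    simp only [eq_iff_iff]
    omega
  have e1 : (s.filter (fun a => w + 1 ≤ a)).sum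
      = ∑ j ∈ Finset.range s.sum, col s (max j w) := by
    rw [← sum_range_col hle, Finset.sum_congr rfl (fun j _ => (hcol j).symm)]
  rw [psum_eq, e1]
  apply Finset.sum_congr rfl
  intro j _
  rcases le_total j w with h | h
  · rw [max_eq_right h, min_eq_left (col_mono s h)]
  · rw [max_eq_left h, min_eq_right (col_mono s h)]

lemma corner_even {s : Multiset ℕ} (hsym : IsSymplectic s) {k : ℕ}
    (h : nth s (k + 1) < nth s k) : Even (psum s k) := by
  set w := nth s (k + 1) with hw
  have hup : col s w ≤ k := by
    by_contra hc
    push_neg at hc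
    have h2 : w + 1 ≤ nth s (k + 1) := (galois s w k).2 hc
    omega
  have hlo : k ≤ col s w := by
    rcases k with _ | k'
    · omega
    · have hk : w + 1 ≤ nth s (k' + 1) := by omega
      have h3 := (galois s w k').1 hk
      omega
  have hcw : col s w = k := le_antisymm hup hlo
  rw [← hcw, psum_col_eq_filter_sum]
  apply even_sum_of_counts
  intro a ha
  rw [Multiset.count_filter]
  split_ifs with h'
  · exact hsym a ha
  · exact ⟨0, rfl⟩

lemma minPart_spec {s : Multiset ℕ} (h0 : 0 ∉ s) (hne : s ≠ 0) :
    minPart s ∈ s ∧ 1 ≤ minPart s ∧ ∀ a ∈ s, minPart s ≤ a := by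
  obtain ⟨c, hc⟩ : ∃ c, Multiset.card s = c := ⟨_, rfl⟩
  have hcard : 1 ≤ c := by
    rw [← hc]
    exact Multiset.card_pos.2 hne
  have hsum : psum s c = s.sum := psum_eq_sum (le_of_eq hc)
  have hstep : psum s c = psum s (c - 1) + nth s c := by
    have h := psum_succ s (c - 1)
    have e : c - 1 + 1 = c := by omega
    rw [e] at h
    omega
  have hle : psum s (c - 1) ≤ s.sum := by omega
  have hmin : minPart s = nth s c := by
    rw [minPart, hc]
    omega
  have hcol0 : col s 0 = c := by
    rw [col, ← hc]
    exact Multiset.countP_eq_card.2 (fun a ha => by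
      have : a ≠ 0 := fun h => h0 (h ▸ ha)
      omega)
  have hv1 : 1 ≤ nth s c := by
    have h2 := (galois s 0 (c - 1)).2 (by omega)
    have e : c - 1 + 1 = c := by omega
    rw [e] at h2
    omega
  have hall : ∀ a ∈ s, nth s c ≤ a := by
    have h2 : c ≤ col s (nth s c - 1) := by
      have h3 := galois s (nth s c - 1) (c - 1)
      have e : c - 1 + 1 = c := by omega
      rw [e] at h3
      exact h3.1 (by omega)
    have hup : col s (nth s c - 1) ≤ c := by
      rw [← hcol0]
      exact col_mono s (by omega)
    have hcc : Multiset.countP (fun a => nth s c - 1 + 1 ≤ a) s = Multiset.card s := by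
      have : col s (nth s c - 1) = Multiset.card s := by omega
      exact this
    have h4 : ∀ a ∈ s, nth s c - 1 + 1 ≤ a := Multiset.countP_eq_card.1 hcc
    intro a ha
    have := h4 a ha
    omega
  have hex : ∃ a ∈ s, a ≤ nth s c := by
    by_contra hc'
    push_neg at hc'
    have hcv : col s (nth s c) = c := by
      have : Multiset.countP (fun a => nth s c + 1 ≤ a) s = Multiset.card s :=
        Multiset.countP_eq_card.2 (fun a ha => by
          have := hc' a ha
          omega)
      have h7 : col s (nth s c) = Multiset.card s := this
      omega
    have h5 : nth s c + 1 ≤ nth s c := by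
      have h6 := (galois s (nth s c) (c - 1)).2 (by omega)
      have e : c - 1 + 1 = c := by omega
      rw [e] at h6
      exact h6
    omega
  obtain ⟨a, ha, hav⟩ := hex
  have hae : a = nth s c := le_antisymm hav (hall a ha)
  rw [hmin]
  exact ⟨hae ▸ ha, hv1, hall⟩

lemma domle_refl (s : Multiset ℕ) : DomLE s s := fun _ => le_rfl

lemma collapse_eq {P : Multiset ℕ → Prop} {N : ℕ} {p q : Multiset ℕ}
    (h : IsCollapseOf P N p q) : collapseOf P N p = q := by
  have hex : ∃ q, IsCollapseOf P N p q := ⟨q, h⟩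
  rw [collapseOf, dif_pos hex]
  have h2 := hex.choose_spec
  apply dom_antisymm h2.1.2 h.1.2
  · exact h.2.2.2 _ h2.1 h2.2.1 h2.2.2.1
  · exact h2.2.2.2 _ h.1 h.2.1 h.2.2.1

lemma expansion_eq {P Sp : Multiset ℕ → Prop} {N : ℕ} {p q : Multiset ℕ}
    (h : IsExpansionOf P Sp N p q) : expansionOf P Sp N p = q := by
  have hex : ∃ q, IsExpansionOf P Sp N p q := ⟨q, h⟩
  rw [expansionOf, dif_pos hex]
  have h2 := hex.choose_spec
  apply dom_antisymm h2.1.2 h.1.2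
  · exact h2.2.2.2.2 _ h.1 h.2.1 h.2.2.1 h.2.2.2.1
  · exact h.2.2.2.2 _ h2.1 h2.2.1 h2.2.2.1 h2.2.2.2.1

lemma sympCollapse_self {N : ℕ} {s : Multiset ℕ} (hpart : IsPartitionOf N s)
    (hsym : IsSymplectic s) : sympCollapse N s = s :=
  collapse_eq ⟨hpart, hsym, domle_refl s, fun _ _ _ h => h⟩


lemma half_sum {s : Multiset ℕ} (h : ∀ a ∈ s, a ≠ 1 → Even a) :
    2 * (s.map (· / 2)).sum + s.count 1 = s.sum := by
  induction s using Multiset.induction with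
  | empty => simp
  | cons a s ih =>
    have ih' := ih (fun b hb hb1 => h b (Multiset.mem_cons_of_mem hb) hb1)
    rw [Multiset.map_cons, Multiset.sum_cons, Multiset.sum_cons, Multiset.count_cons]
    by_cases ha : a = 1
    · subst ha
      rw [if_pos rfl]
      omega
    · have he := h a (Multiset.mem_cons_self a s) ha
      obtain ⟨c, hc⟩ := he
      rw [if_neg (fun h' => ha h'.symm)]
      omega

lemma transpose_transpose {s : Multiset ℕ} (h0 : 0 ∉ s) : transpose (transpose s) = s := by
  apply ext_col (zero_notMem_transpose _) h0
  intro j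
  rw [col_transpose, nth_transpose h0]

end Aux41


/- STATEMENT 6 (Theorem 4.2(1)(i)): let `p` be an orthogonal partition of `2n+1`
whose smallest part is `1` with multiplicity `1` and all of whose other parts are even.
Then `([p₁ p₁ (2n*)]^t)_{Sp_{2n}} = (p^-)_{Sp_{2n}}`, and consequently
`[p₁ p₁ (2n*)]^{Sp_{2n}} = ((p^t)^-)_{Sp_{2n}}`. -/

open Aux41 in
/-- Theorem 4.2(1)(i): let `p` be an orthogonal partition of `2n+1`
whose smallest part is `1` with multiplicity `1` and all of whose other parts are even.
Then `([p₁ p₁ (2n*)]^t)_{Sp_{2n}} = (p^-)_{Sp_{2n}}`, and consequently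
`[p₁ p₁ (2n*)]^{Sp_{2n}} = ((p^t)^-)_{Sp_{2n}}`. -/
theorem criterion_sp_case_i (n : ℕ) (p : Multiset ℕ)
    (hp : IsPartitionOf (2 * n + 1) p) (horth : IsOrthogonal p)
    (h1 : p.count 1 = 1) (heven : ∀ a ∈ p, a ≠ 1 → Even a) :
    sympCollapse (2 * n) (transpose (qqm (pOne p) (2 * nStar p))) =
        sympCollapse (2 * n) (pMinus p) ∧
      sympExpansion (2 * n) (qqm (pOne p) (2 * nStar p)) =
        sympCollapse (2 * n) (pMinus (transpose p)) := by
  classical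
  obtain ⟨hsum, h0⟩ := hp
  have h1p : (1 : ℕ) ∈ p := by
    rw [← Multiset.count_pos, h1]
    omega
  have hpe : 1 ::ₘ p.erase 1 = p := Multiset.cons_erase h1p
  have h0e : (0 : ℕ) ∉ p.erase 1 := fun h => h0 (Multiset.mem_of_mem_erase h)
  have hesum : (p.erase 1).sum = 2 * n := by
    have h2 := congrArg Multiset.sum hpe
    rw [Multiset.sum_cons] at h2
    omega
  have hcount : ∀ a, a ≠ 1 → Even (p.count a) := by
    intro a ha
    by_cases hm : a ∈ p
    · exact horth a (heven a hm ha)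
    · rw [Multiset.count_eq_zero.2 hm]
      exact Even.zero
  have hoddc : ∀ a, Odd a → a ≠ 1 → p.count a = 0 := by
    intro a hodd ha
    rw [Multiset.count_eq_zero]
    intro hm
    have he := heven a hm ha
    rw [Nat.even_iff] at he
    rw [Nat.odd_iff] at hodd
    omega
  have colp0 : col p 0 = Multiset.card p := by
    rw [col]
    exact Multiset.countP_eq_card.2 (fun a ha => by
      have : a ≠ 0 := fun h => h0 (h ▸ ha)
      omega)
  have colp_erase : ∀ j, col p j = col (p.erase 1) j + (if j = 0 then 1 else 0) := by
    intro j
    have h2 : col p j = col (p.erase 1) j + (if j + 1 ≤ 1 then 1 else 0) := by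
      conv_lhs => rw [← hpe]
      exact Multiset.countP_cons _ _ _
    rw [h2]
    congr 1
    split_ifs <;> omega
  have colp_even : ∀ j, 1 ≤ j → Even (col p j) :=
    fun j hj => even_countP _ (fun a ha => hcount a (by omega))
  have hoddce : ∀ a, Odd a → (p.erase 1).count a = 0 := by
    intro a hodd
    by_cases ha : a = 1
    · subst ha
      rw [Multiset.count_erase_self, h1]
    · rw [Multiset.count_erase_of_ne ha]
      exact hoddc a hodd ha
  have colpe_pair : ∀ i, col (p.erase 1) (2 * i) = col (p.erase 1) (2 * i + 1) := by
    intro i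
    have h2 := col_succ (p.erase 1) (2 * i)
    rw [hoddce (2 * i + 1) (Nat.odd_iff.2 (by omega))] at h2
    omega
  -- n* = 0
  have hc1 : p.countP (fun a => a = 1) = 1 := by
    have h2 : p.countP (fun a => a = 1) = p.count 1 := by
      rw [Multiset.count]
      apply Multiset.countP_congr rfl
      intro x _
      simp only [eq_iff_iff]
      exact ⟨fun h => h.symm, fun h => h.symm⟩
    rw [h2, h1]
  have hnstar : nStar p = 0 := by
    have h2 : p.countP (Odd ·) = p.countP (fun a => a = 1) := by
      apply Multiset.countP_congr rfl
      intro x hx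
      simp only [eq_iff_iff]
      constructor
      · intro hox
        by_contra hne
        have he := heven x hx hne
        rw [Nat.even_iff] at he
        rw [Nat.odd_iff] at hox
        omega
      · rintro rfl
        exact Nat.odd_iff.2 rfl
    rw [nStar, h2, hc1]
  -- pMinus p = p.erase 1
  have hcardp : 1 ≤ Multiset.card p :=
    Multiset.card_pos.2 (fun h => by rw [h] at h1p; simp at h1p)
  have colp1 : col p 1 = Multiset.card p - 1 := by
    have h2 := col_succ p 0
    rw [show (0 : ℕ) + 1 = 1 from rfl, h1] at h2
    omega
  have hnth_card : nth p (Multiset.card p) = 1 := by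
    rw [nth]
    have h2 : (Finset.range p.sum).filter (fun j => Multiset.card p ≤ col p j) = {0} := by
      ext j
      simp only [Finset.mem_filter, Finset.mem_range, Finset.mem_singleton]
      constructor
      · rintro ⟨hj1, hj2⟩
        by_contra hj0
        have hmono := col_mono p (show 1 ≤ j by omega)
        omega
      · rintro rfl
        exact ⟨by omega, le_of_eq colp0.symm⟩
    rw [h2, Finset.card_singleton]
  have hminp : minPart p = 1 := by
    have hs1 : psum p (Multiset.card p) = p.sum := psum_eq_sum le_rfl
    have hs2 := psum_succ p (Multiset.card p - 1)
    have e : Multiset.card p - 1 + 1 = Multiset.card p := by omega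
    rw [e] at hs2
    rw [minPart]
    omega
  have hpminus : pMinus p = p.erase 1 := by
    rw [pMinus, hminp]
    rw [show (1 : ℕ) - 1 = 0 from rfl]
    rw [Multiset.filter_cons_of_neg _ (by omega)]
    exact Multiset.filter_eq_self.2 (fun a ha => by
      have : a ≠ 0 := fun h => h0e (h ▸ ha)
      omega)
  -- X = transpose (p.erase 1)
  set X := transpose (p.map (· / 2)) + transpose (p.map (· / 2)) with hXdef
  have hX : qqm (pOne p) (2 * nStar p) = X := by
    rw [hnstar]
    rfl
  have hhsum : 2 * (p.map (· / 2)).sum + 1 = p.sum := by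
    have h2 := half_sum heven
    omega
  have hXsum : X.sum = 2 * (p.map (· / 2)).sum := by
    rw [hXdef, Multiset.sum_add, transpose_sum]
    omega
  have colhh : ∀ z, col (p.map (· / 2)) z = p.countP (fun a => 2 * z + 2 ≤ a) := by
    intro z
    rw [col, Multiset.countP_map, ← Multiset.countP_eq_card_filter]
    apply Multiset.countP_congr rfl
    intro x _
    simp only [eq_iff_iff]
    omega
  have colX : ∀ i, col X i = 2 * nth (p.map (· / 2)) (i + 1) := by
    intro i
    rw [hXdef, col_add, col_transpose]
    omega
  have colTX : ∀ j, col (transpose X) j = col (p.erase 1) j := by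
    intro j
    rw [col_transpose]
    have e1 : (Finset.range X.sum).filter (fun i => j + 1 ≤ col X i)
        = (Finset.range X.sum).filter (fun i => i < col (p.map (· / 2)) (j / 2)) := by
      apply Finset.filter_congr
      intro i _
      constructor
      · intro h'
        have h2 : j / 2 + 1 ≤ nth (p.map (· / 2)) (i + 1) := by
          have h3 := colX i
          omega
        have h4 := (galois (p.map (· / 2)) (j / 2) i).1 h2
        omega
      · intro h'
        have h2 := (galois (p.map (· / 2)) (j / 2) i).2 (by omega)
        have h3 := colX i
        omega
    have e2 : (Finset.range X.sum).filter (fun i => i < col (p.map (· / 2)) (j / 2))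
        = Finset.range (col (p.map (· / 2)) (j / 2)) := by
      ext i
      simp only [Finset.mem_filter, Finset.mem_range]
      have h2 := col_le_sum (p.map (· / 2)) (j / 2)
      omega
    rw [nth, e1, e2, Finset.card_range]
    -- now: col (p.map (·/2)) (j/2) = col (p.erase 1) j
    have ew : col (p.map (· / 2)) (j / 2) = col p (2 * (j / 2) + 1) := by
      rw [colhh, col]
    rcases Nat.even_or_odd j with hj | hj
    · have e3 : 2 * (j / 2) + 1 = j + 1 := by
        rw [Nat.even_iff] at hj
        omega
      rw [ew, e3]
      have hcs := col_succ p j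
      have hce := colp_erase j
      by_cases hj0 : j = 0
      · subst hj0
        rw [if_pos rfl] at hce
        have hone : p.count (0 + 1) = 1 := h1
        omega
      · have hz : p.count (j + 1) = 0 :=
          hoddc (j + 1) (Nat.odd_iff.2 (by rw [Nat.even_iff] at hj; omega)) (by omega)
        rw [if_neg hj0] at hce
        omega
    · have e3 : 2 * (j / 2) + 1 = j := by
        rw [Nat.odd_iff] at hj
        omega
      rw [ew, e3]
      have hce := colp_erase j
      rw [if_neg (by rw [Nat.odd_iff] at hj; omega)] at hce
      omega
  have h0X : (0 : ℕ) ∉ X := by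
    intro hmem
    rcases Multiset.mem_add.1 hmem with h' | h' <;> exact zero_notMem_transpose _ h'
  have hTX : transpose X = p.erase 1 := ext_col (zero_notMem_transpose X) h0e colTX
  have hXm : X = transpose (p.erase 1) := by
    conv_lhs => rw [← transpose_transpose h0X]
    rw [hTX]
  -- facts about m := transpose (p.erase 1)
  have hm0 : (0 : ℕ) ∉ transpose (p.erase 1) := zero_notMem_transpose _
  have hmsum : (transpose (p.erase 1)).sum = 2 * n := by
    rw [transpose_sum, hesum]
  have colm_even : ∀ j, Even (col (transpose (p.erase 1)) j) := by
    intro j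
    rw [col_transpose, nth, Finset.card_filter, hesum]
    exact pair_sum_even _ (fun i => by rw [colpe_pair i]) n
  have hmsym : IsSymplectic (transpose (p.erase 1)) := by
    intro a _
    rcases a with _ | b
    · rw [Multiset.count_eq_zero.2 hm0]
      exact Even.zero
    · have e1 := col_succ (transpose (p.erase 1)) b
      obtain ⟨x, hx⟩ := colm_even b
      obtain ⟨y, hy⟩ := colm_even (b + 1)
      exact ⟨x - y, by omega⟩
  -- facts about t := transpose p
  have hcardmod : Multiset.card p % 2 = 1 := by
    have h2 : p.countP (fun a => a = 1) + p.countP (fun a => ¬ a = 1) = Multiset.card p := by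
      rw [Multiset.countP_eq_card_filter, Multiset.countP_eq_card_filter, ← Multiset.card_add,
        Multiset.filter_add_not]
    obtain ⟨c, hc⟩ := even_countP (fun a => ¬ a = 1) (fun a ha => hcount a ha)
    omega
  have psumt_odd : ∀ k, psum (transpose p) (k + 1) % 2 = 1 := by
    intro k
    induction k with
    | zero =>
      rw [psum_succ, psum_zero, nth_transpose h0, colp0]
      omega
    | succ k ih =>
      rw [psum_succ, nth_transpose h0]
      have he := colp_even (k + 1) (by omega)
      rw [Nat.even_iff] at he
      omega
  have psum_m : ∀ k, psum (transpose (p.erase 1)) (k + 1) + 1 = psum (transpose p) (k + 1) := by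
    intro k
    induction k with
    | zero =>
      rw [psum_succ (transpose (p.erase 1)) 0, psum_succ (transpose p) 0, psum_zero, psum_zero,
        nth_transpose h0, nth_transpose h0e]
      have h2 := colp_erase 0
      rw [if_pos rfl] at h2
      omega
    | succ k ih =>
      rw [psum_succ (transpose (p.erase 1)) (k + 1), psum_succ (transpose p) (k + 1),
        nth_transpose h0, nth_transpose h0e]
      have h2 := colp_erase (k + 1)
      rw [if_neg (by omega)] at h2
      omega
  -- pMinus (transpose p)
  have htne : transpose p ≠ 0 := by
    intro h
    have h2 := transpose_sum p
    rw [h, Multiset.sum_zero, hsum] at h2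
    omega
  obtain ⟨hvmem, hv1, hvmin⟩ := minPart_spec (zero_notMem_transpose p) htne
  have colpmt : ∀ j, col (transpose p) j
      = col (pMinus (transpose p)) j + (if j = minPart (transpose p) - 1 then 1 else 0) := by
    intro j
    have e1 : col (pMinus (transpose p)) j
        = col ((minPart (transpose p) - 1) ::ₘ (transpose p).erase (minPart (transpose p))) j := by
      rw [pMinus, col, col, Multiset.countP_filter]
      apply Multiset.countP_congr rfl
      intro x _
      simp only [eq_iff_iff]
      omega
    have e2 : col ((minPart (transpose p) - 1) ::ₘ (transpose p).erase (minPart (transpose p))) j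
        = col ((transpose p).erase (minPart (transpose p))) j
          + (if j + 1 ≤ minPart (transpose p) - 1 then 1 else 0) :=
      Multiset.countP_cons _ _ _
    have e3 : col (transpose p) j
        = col ((transpose p).erase (minPart (transpose p))) j
          + (if j + 1 ≤ minPart (transpose p) then 1 else 0) := by
      conv_lhs => rw [col, ← Multiset.cons_erase hvmem]
      exact Multiset.countP_cons _ _ _
    rw [e1, e2, e3]
    split_ifs <;> omega
  have hdompm : ∀ j, col (pMinus (transpose p)) j ≤ col (transpose p) j := by
    intro j
    have h2 := colpmt j
    split_ifs at h2 <;> omega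
  have psum_pmt : ∀ k, psum (transpose p) k ≤ psum (pMinus (transpose p)) k + 1 := by
    intro k
    have hM1 : (transpose p).sum ≤ max (transpose p).sum (pMinus (transpose p)).sum :=
      le_max_left _ _
    have hM2 : (pMinus (transpose p)).sum ≤ max (transpose p).sum (pMinus (transpose p)).sum :=
      le_max_right _ _
    rw [psum_ext _ k hM1, psum_ext _ k hM2]
    have key : ∀ j, min k (col (transpose p) j)
        ≤ min k (col (pMinus (transpose p)) j) + (if j = minPart (transpose p) - 1 then 1 else 0) := by
      intro j
      have h2 := colpmt j
      split_ifs at h2 ⊢ <;> omega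
    calc ∑ j ∈ Finset.range (max (transpose p).sum (pMinus (transpose p)).sum),
          min k (col (transpose p) j)
        ≤ ∑ j ∈ Finset.range (max (transpose p).sum (pMinus (transpose p)).sum),
          (min k (col (pMinus (transpose p)) j) + (if j = minPart (transpose p) - 1 then 1 else 0)) :=
          Finset.sum_le_sum (fun j _ => key j)
      _ = (∑ j ∈ Finset.range (max (transpose p).sum (pMinus (transpose p)).sum),
          min k (col (pMinus (transpose p)) j))
          + ∑ j ∈ Finset.range (max (transpose p).sum (pMinus (transpose p)).sum),
          (if j = minPart (transpose p) - 1 then 1 else 0) := Finset.sum_add_distrib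
      _ ≤ (∑ j ∈ Finset.range (max (transpose p).sum (pMinus (transpose p)).sum),
          min k (col (pMinus (transpose p)) j)) + 1 := by
          have h3 := Finset.sum_ite_eq'
            (Finset.range (max (transpose p).sum (pMinus (transpose p)).sum))
            (minPart (transpose p) - 1) (fun _ => (1 : ℕ))
          rw [h3]
          split_ifs <;> omega
  have dom_m_pmt : DomLE (transpose (p.erase 1)) (pMinus (transpose p)) := by
    intro k
    cases k with
    | zero =>
      rw [psum_zero, psum_zero]
    | succ k =>
      have h2 := psum_m k
      have h3 := psum_pmt (k + 1)
      omega
  have hmax : ∀ q', IsPartitionOf (2 * n) q' → IsSymplectic q' →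
      DomLE q' (pMinus (transpose p)) → DomLE q' (transpose (p.erase 1)) := by
    intro q' hq'p hq's hq'd
    have hq't : ∀ k, psum q' k ≤ psum (transpose p) k :=
      fun k => le_trans (hq'd k) (psum_mono_col hdompm k)
    intro k
    cases k with
    | zero =>
      rw [psum_zero, psum_zero]
    | succ k =>
      by_contra hlt
      push_neg at hlt
      have heq : psum q' (k + 1) = psum (transpose p) (k + 1) := by
        have h2 := psum_m k
        have h3 := hq't (k + 1)
        omega
      have hstep : ∀ d, psum q' (k + 1 + d) = psum (transpose p) (k + 1 + d) := by
        intro d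
        induction d with
        | zero => simpa using heq
        | succ d ih =>
          have e : k + 1 + d = k + d + 1 := by omega
          rw [e] at ih
          have hK1 : psum q' (k + d) ≤ psum (transpose p) (k + d) := hq't _
          have eq1 : psum q' (k + d + 1) = psum q' (k + d) + nth q' (k + d + 1) :=
            psum_succ q' (k + d)
          have eq2 : psum (transpose p) (k + d + 1)
              = psum (transpose p) (k + d) + nth (transpose p) (k + d + 1) :=
            psum_succ (transpose p) (k + d)
          have hge : nth (transpose p) (k + d + 1) ≤ nth q' (k + d + 1) := by omega
          have e2 : k + 1 + (d + 1) = k + d + 1 + 1 := by omega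
          rw [e2]
          rcases Nat.lt_or_ge (nth q' (k + d + 1 + 1)) (nth q' (k + d + 1)) with hcor | hflat
          · exfalso
            have hev := corner_even hq's hcor
            have hodd := psumt_odd (k + d)
            rw [Nat.even_iff] at hev
            omega
          · have eq3 : psum q' (k + d + 1 + 1) = psum q' (k + d + 1) + nth q' (k + d + 1 + 1) :=
              psum_succ q' (k + d + 1)
            have eq4 : psum (transpose p) (k + d + 1 + 1)
                = psum (transpose p) (k + d + 1) + nth (transpose p) (k + d + 1 + 1) :=
              psum_succ (transpose p) (k + d + 1)
            have hanti_q : nth q' (k + d + 1 + 1) ≤ nth q' (k + d + 1) :=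
              nth_antitone q' (by omega)
            have hanti_t : nth (transpose p) (k + d + 1 + 1) ≤ nth (transpose p) (k + d + 1) :=
              nth_antitone (transpose p) (by omega)
            have hle2 := hq't (k + d + 1 + 1)
            omega
      have hbig := hstep (2 * n + 1)
      have hq'sum : psum q' (k + 1 + (2 * n + 1)) = 2 * n := by
        have hcle := card_le_sum hq'p.2
        rw [psum_eq_sum (by rw [hq'p.1] at hcle; omega), hq'p.1]
      have htsum : psum (transpose p) (k + 1 + (2 * n + 1)) = 2 * n + 1 := by
        have hcle := card_le_sum (zero_notMem_transpose p)
        have h6 := transpose_sum p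
        rw [psum_eq_sum (by omega), transpose_sum, hsum]
      omega
  have hC : sympCollapse (2 * n) (pMinus (transpose p)) = transpose (p.erase 1) := by
    rw [sympCollapse]
    exact collapse_eq ⟨⟨hmsum, hm0⟩, hmsym, dom_m_pmt, hmax⟩
  -- speciality
  have hsymp_erase : IsSymplectic (p.erase 1) := by
    intro a ha
    rw [hoddce a ha]
    exact Even.zero
  have hspec : IsSpecialSymp (2 * n) (transpose (p.erase 1)) := by
    rw [IsSpecialSymp, transpose_transpose h0e,
      sympCollapse_self ⟨hesum, h0e⟩ hsymp_erase,
      sympCollapse_self ⟨hmsum, hm0⟩ hmsym]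
  constructor
  · rw [hX, hXm, transpose_transpose h0e, hpminus]
  · rw [hX, hXm, hC, sympExpansion]
    exact expansion_eq ⟨⟨hmsum, hm0⟩, hmsym, hspec, domle_refl _, fun q' _ _ _ h => h⟩
end

section
/- Let p be a symplectic partition of 2n, with p_1 and n* as defined. Then [p_1 p_1 (2n*+1)]^{SO_{2n+1}} = ((p^t)^+)_{SO_{2n+1}} if and only if ([p_1 p_1 (2n*+1)]^t)_{SO_{2n+1}} = (p^+)_{SO_{2n+1}}. (Theorem 4.2(2) of the paper, case G_n = SO_{2n+1}; note [p_1 p_1 (2n*+1)] is a partition of 2n+1.) -/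
/-!
Write `d y = (yᵗ)_{SO_{2n+1}}`. It reverses dominance and satisfies `y ≤ d (d y)` for orthogonal
`y`, hence `d ∘ d ∘ d = d` and the orthogonal expansion of `y` is `d (d y)`. With
`A = ((pᵗ)⁺)_{SO}` and `B = (p⁺)_{SO}` it then suffices to know `d B = A` and `d A = B`:
`d (d q) = A` gives `d q = d (d (d q)) = d A = B`, and `d q = B` gives `d (d q) = d B = A`.

All comparisons go through the column sums `Σ_{a ∈ y} min a m`: dominance compares them in reverse,
transposition swaps them with the sums of the largest parts, and orthogonality says they have the
parity of `|y|` at odd `m`. The identity `d B = A` comes from two inequalities. First, making a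
partition orthogonal costs at most one box in each initial block of columns, which gives
`Bᵗ ≤ (pᵗ)⁺`. Second, the `k` largest parts of `A` and the `j` largest parts of `B` add up to at
most `kj + 2n + 1`, which gives `A ≤ Bᵗ`. The second bound is immediate unless the `j` largest
parts and the first `k` columns of `p` cover `p` with overlap exactly `j × k`; in that case the
parts of `p` longer than `k` have even total length because `p` is symplectic, and this parity
saves the last box at a suitable odd row or column. The identity `d A = B` follows in the same way.
-/

namespace Partitions

/-! ### Column sums and transposition -/

def countGE (p : Multiset ℕ) (m : ℕ) : ℕ := p.countP (m ≤ ·)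

/-- The number of boxes in the first `m` columns of the Young diagram of `p`, that is
`Σ_{a ∈ p} min a m` (`colSum_eq_sum_min`). -/
def colSum (p : Multiset ℕ) (m : ℕ) : ℕ := ∑ u ∈ Finset.range m, countGE p (u + 1)

lemma countGE_anti (p : Multiset ℕ) {m m' : ℕ} (h : m ≤ m') : countGE p m' ≤ countGE p m := by
  simpa only [countGE, Multiset.countP_eq_card_filter] using
    Multiset.card_le_card (Multiset.monotone_filter_right p fun _ ha => h.trans ha)

lemma countGE_le_card (p : Multiset ℕ) (m : ℕ) : countGE p m ≤ Multiset.card p :=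
  Multiset.countP_le_card _ _

lemma countGE_eq_zero_of_sum_lt {p : Multiset ℕ} {m : ℕ} (h : p.sum < m) : countGE p m = 0 :=
  Multiset.countP_eq_zero.mpr fun _ ha hma => (hma.trans (Multiset.le_sum_of_mem ha)).not_gt h

lemma countGE_cons (a : ℕ) (p : Multiset ℕ) (m : ℕ) :
    countGE (a ::ₘ p) m = countGE p m + if m ≤ a then 1 else 0 :=
  Multiset.countP_cons _ a p

lemma countGE_eq_add_count (p : Multiset ℕ) (a : ℕ) :
    countGE p a = countGE p (a + 1) + p.count a := by
  induction p using Multiset.induction with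
  | empty => simp [countGE]
  | cons b s ih =>
    rw [countGE_cons, countGE_cons, Multiset.count_cons]
    split_ifs <;> omega

lemma card_le_sum {p : Multiset ℕ} (h : 0 ∉ p) : Multiset.card p ≤ p.sum := by
  simpa using Multiset.card_nsmul_le_sum (s := p) (a := 1)
    fun a ha => Nat.pos_of_ne_zero (ne_of_mem_of_not_mem ha h)

lemma sum_range_ite_le_eq_min (a m : ℕ) :
    (∑ u ∈ Finset.range m, if u + 1 ≤ a then 1 else 0) = min a m := by
  induction m with
  | zero => simp
  | succ m ih =>
    rw [Finset.sum_range_succ, ih]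
    split_ifs <;> omega

lemma colSum_eq_sum_min (p : Multiset ℕ) (m : ℕ) : colSum p m = (p.map (min · m)).sum := by
  induction p using Multiset.induction with
  | empty => simp [colSum, countGE]
  | cons a s ih =>
    rw [Multiset.map_cons, Multiset.sum_cons, ← ih, colSum, colSum]
    simp only [countGE_cons]
    rw [Finset.sum_add_distrib, sum_range_ite_le_eq_min]
    omega

lemma colSum_zero (p : Multiset ℕ) : colSum p 0 = 0 := rfl

lemma colSum_succ (p : Multiset ℕ) (m : ℕ) : colSum p (m + 1) = colSum p m + countGE p (m + 1) :=
  Finset.sum_range_succ _ _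

lemma colSum_mono (p : Multiset ℕ) {m m' : ℕ} (h : m ≤ m') : colSum p m ≤ colSum p m' := by
  rw [colSum_eq_sum_min, colSum_eq_sum_min]
  exact Multiset.sum_map_le_sum_map _ _ fun a _ => min_le_min le_rfl h

lemma colSum_concave (p : Multiset ℕ) (m : ℕ) :
    colSum p (m + 2) + colSum p m ≤ colSum p (m + 1) + colSum p (m + 1) := by
  rw [colSum_succ, colSum_succ]
  have := countGE_anti p (show m + 1 ≤ m + 1 + 1 by omega)
  omega

lemma colSum_le_sum (p : Multiset ℕ) (m : ℕ) : colSum p m ≤ p.sum := by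
  rw [colSum_eq_sum_min]
  simpa using Multiset.sum_map_le_sum_map (min · m) id fun a _ => min_le_left a m

lemma colSum_eq_sum_of_forall_le {p : Multiset ℕ} {m : ℕ} (h : ∀ a ∈ p, a ≤ m) :
    colSum p m = p.sum := by
  rw [colSum_eq_sum_min, ← Multiset.map_id' p, Multiset.map_map]
  congr 1
  exact Multiset.map_congr rfl fun a ha => min_eq_left (h a ha)

lemma colSum_eq_sum {p : Multiset ℕ} {m : ℕ} (h : p.sum ≤ m) : colSum p m = p.sum :=
  colSum_eq_sum_of_forall_le fun _ ha => (Multiset.le_sum_of_mem ha).trans h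

lemma colSum_add_sum_sub (p : Multiset ℕ) (m : ℕ) :
    colSum p m + (p.map (· - m)).sum = p.sum := by
  rw [colSum_eq_sum_min, ← Multiset.sum_map_add]
  conv_rhs => rw [← Multiset.map_id' p]
  congr 1
  exact Multiset.map_congr rfl fun a _ => by omega

lemma sum_eq_sum_countGE (p : Multiset ℕ) :
    p.sum = ∑ j ∈ Finset.range p.sum, countGE p (j + 1) :=
  (colSum_eq_sum le_rfl).symm

lemma psum_eq_sum_min (p : Multiset ℕ) (k : ℕ) :
    psum p k = ∑ j ∈ Finset.range p.sum, min k (countGE p (j + 1)) := rfl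

lemma psum_zero (p : Multiset ℕ) : psum p 0 = 0 := by simp [psum_eq_sum_min]

lemma psum_le_sum (p : Multiset ℕ) (k : ℕ) : psum p k ≤ p.sum := by
  rw [psum_eq_sum_min]
  conv_rhs => rw [sum_eq_sum_countGE p]
  exact Finset.sum_le_sum fun j _ => min_le_right _ _

/-- The `k` largest parts and the first `m` columns together cover the diagram and overlap in
at most a `k × m` rectangle. -/
lemma psum_add_colSum_le (p : Multiset ℕ) (k m : ℕ) : psum p k + colSum p m ≤ k * m + p.sum := by
  have hsum := sum_eq_sum_countGE p
  rcases le_or_gt m p.sum with hm | hm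
  · rw [psum_eq_sum_min]
    rw [← Finset.sum_range_add_sum_Ico _ hm] at hsum ⊢
    have h1 : ∑ j ∈ Finset.range m, min k (countGE p (j + 1)) ≤ k * m := by
      simpa [mul_comm] using Finset.sum_le_card_nsmul (Finset.range m) _ k
        fun j _ => min_le_left _ _
    have h2 : ∑ j ∈ Finset.Ico m p.sum, min k (countGE p (j + 1)) ≤
        ∑ j ∈ Finset.Ico m p.sum, countGE p (j + 1) :=
      Finset.sum_le_sum fun j _ => min_le_right _ _
    have h3 : colSum p m = ∑ j ∈ Finset.range m, countGE p (j + 1) := rfl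
    omega
  · rw [colSum_eq_sum hm.le]
    rcases Nat.eq_zero_or_pos k with rfl | hk
    · simp [psum_zero]
    · nlinarith [psum_le_sum p k]

/-- Equality case of `psum_add_colSum_le`: the `j` largest rows all reach column `m` and include
every row longer than `m`. -/
lemma psum_add_colSum_eq {p : Multiset ℕ} {j m : ℕ} (h₀ : countGE p (m + 1) ≤ j)
    (h₁ : j ≤ countGE p m) : psum p j + colSum p m = j * m + p.sum := by
  have hsum := sum_eq_sum_countGE p
  rcases le_or_gt m p.sum with hm | hm
  · rw [psum_eq_sum_min]
    rw [← Finset.sum_range_add_sum_Ico _ hm] at hsum ⊢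
    have h1 : ∀ i ∈ Finset.range m, min j (countGE p (i + 1)) = j := fun i hi =>
      min_eq_left (h₁.trans (countGE_anti p (by have := Finset.mem_range.mp hi; omega)))
    have h2 : ∀ i ∈ Finset.Ico m p.sum, min j (countGE p (i + 1)) = countGE p (i + 1) :=
      fun i hi => min_eq_right
        ((countGE_anti p (by have := (Finset.mem_Ico.mp hi).1; omega)).trans h₀)
    rw [Finset.sum_congr rfl h1, Finset.sum_congr rfl h2, Finset.sum_const, Finset.card_range,
      smul_eq_mul]
    have h3 : colSum p m = ∑ i ∈ Finset.range m, countGE p (i + 1) := rfl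
    rw [h3]
    linarith [mul_comm m j]
  · have h0 : j = 0 := Nat.le_zero.mp (h₁.trans (countGE_eq_zero_of_sum_lt hm).le)
    rw [h0, psum_zero, colSum_eq_sum hm.le]
    ring

lemma psum_countGE_add_colSum (p : Multiset ℕ) (m : ℕ) :
    psum p (countGE p (m + 1)) + colSum p m = countGE p (m + 1) * m + p.sum :=
  psum_add_colSum_eq le_rfl (countGE_anti p (Nat.le_succ m))

lemma countP_eq_sum_ite (P : ℕ → Prop) [DecidablePred P] (s : Multiset ℕ) :
    s.countP P = (s.map fun a => if P a then 1 else 0).sum := by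
  induction s using Multiset.induction with
  | empty => simp
  | cons a s ih => rw [Multiset.countP_cons, Multiset.map_cons, Multiset.sum_cons, ih]; omega

lemma countP_range (P : ℕ → Prop) [DecidablePred P] (N : ℕ) :
    (Multiset.range N).countP P = ∑ j ∈ Finset.range N, if P j then 1 else 0 := by
  rw [countP_eq_sum_ite]; rfl

lemma lt_countP_range_iff {P : ℕ → Prop} [DecidablePred P] (hP : ∀ u v, u ≤ v → P v → P u)
    {N i : ℕ} : i < (Multiset.range N).countP P ↔ i < N ∧ P i := by
  rw [countP_range]
  constructor
  · intro h
    by_contra hc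
    have hbound : ∀ j ∈ Finset.range N,
        (if P j then 1 else 0) ≤ if j + 1 ≤ i then 1 else 0 := by
      intro j hj
      have := Finset.mem_range.mp hj
      split_ifs with h1 h2 <;> try omega
      exact absurd ⟨by omega, hP i j (by omega) h1⟩ hc
    have := (Finset.sum_le_sum hbound).trans_eq (sum_range_ite_le_eq_min i N)
    omega
  · rintro ⟨hiN, hPi⟩
    have hsub : ∑ j ∈ Finset.range (i + 1), (if P j then 1 else 0) ≤
        ∑ j ∈ Finset.range N, (if P j then 1 else 0) :=
      Finset.sum_le_sum_of_subset (Finset.range_subset_range.mpr (by omega))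
    have hall : ∀ j ∈ Finset.range (i + 1), (if P j then 1 else 0) = 1 := fun j hj =>
      if_pos (hP j i (by have := Finset.mem_range.mp hj; omega) hPi)
    rw [Finset.sum_congr rfl hall, Finset.sum_const, Finset.card_range, smul_eq_mul,
      mul_one] at hsub
    omega

lemma transpose_eq (p : Multiset ℕ) :
    transpose p = ((Multiset.range p.sum).map fun j => countGE p (j + 1)).filter (0 < ·) :=
  rfl

lemma zero_notMem_transpose (p : Multiset ℕ) : 0 ∉ transpose p := fun h =>
  (Multiset.of_mem_filter h).false

lemma sum_filter_pos (s : Multiset ℕ) : (s.filter (0 < ·)).sum = s.sum := by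
  induction s using Multiset.induction with
  | empty => simp
  | cons a s ih =>
    rw [Multiset.filter_cons, Multiset.sum_cons]
    rcases Nat.eq_zero_or_pos a with rfl | ha
    · simpa using ih
    · simp [ha, ih]

lemma sum_transpose (p : Multiset ℕ) : (transpose p).sum = p.sum := by
  rw [transpose_eq, sum_filter_pos]
  exact (sum_eq_sum_countGE p).symm

lemma isPartitionOf_transpose {N : ℕ} {p : Multiset ℕ} (hp : IsPartitionOf N p) :
    IsPartitionOf N (transpose p) :=
  ⟨(sum_transpose p).trans hp.1, zero_notMem_transpose p⟩

lemma countGE_transpose (p : Multiset ℕ) {i : ℕ} (hi : 1 ≤ i) :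
    countGE (transpose p) i = (Multiset.range p.sum).countP fun j => i ≤ countGE p (j + 1) := by
  rw [countGE, transpose_eq, Multiset.countP_filter, Multiset.countP_map,
    ← Multiset.countP_eq_card_filter]
  exact Multiset.countP_congr rfl fun j _ => propext ⟨fun h => h.1, fun h => ⟨h, by omega⟩⟩

lemma psum_eq_colSum_transpose (p : Multiset ℕ) (k : ℕ) : psum p k = colSum (transpose p) k := by
  rw [psum_eq_sum_min, colSum]
  simp_rw [countGE_transpose p (Nat.succ_pos _), countP_range]
  rw [Finset.sum_comm]
  exact Finset.sum_congr rfl fun j _ => by rw [sum_range_ite_le_eq_min, min_comm]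

lemma lt_countGE_transpose_iff (p : Multiset ℕ) (i j : ℕ) :
    j < countGE (transpose p) (i + 1) ↔ i < countGE p (j + 1) := by
  rw [countGE_transpose p (by omega),
    lt_countP_range_iff fun u v huv hv => hv.trans (countGE_anti p (by omega))]
  refine ⟨fun h => h.2, fun h => ⟨?_, h⟩⟩
  obtain ⟨a, ha, hja⟩ := Multiset.countP_pos.mp (show 0 < countGE p (j + 1) by omega)
  have := Multiset.le_sum_of_mem ha
  omega

lemma countGE_transpose_transpose {p : Multiset ℕ} (hp : 0 ∉ p) {m : ℕ} (hm : 1 ≤ m) :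
    countGE (transpose (transpose p)) m = countGE p m := by
  obtain ⟨i, rfl⟩ : ∃ i, m = i + 1 := ⟨m - 1, by omega⟩
  rw [countGE_transpose _ hm, sum_transpose,
    Multiset.countP_congr rfl fun j _ => propext (Nat.lt_iff_add_one_le.symm.trans
      ((lt_countGE_transpose_iff p j i).trans Nat.lt_iff_add_one_le)), countP_range,
    sum_range_ite_le_eq_min]
  exact min_eq_left ((countGE_le_card p _).trans (card_le_sum hp))

lemma eq_of_countGE_eq {p q : Multiset ℕ} (hp : 0 ∉ p) (hq : 0 ∉ q)
    (h : ∀ m, 1 ≤ m → countGE p m = countGE q m) : p = q := by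
  ext a
  rcases Nat.eq_zero_or_pos a with rfl | ha
  · rw [Multiset.count_eq_zero_of_notMem hp, Multiset.count_eq_zero_of_notMem hq]
  · have h1 := countGE_eq_add_count p a
    have h2 := countGE_eq_add_count q a
    have h3 := h a ha
    have h4 := h (a + 1) (by omega)
    omega

lemma transpose_transpose {p : Multiset ℕ} (hp : 0 ∉ p) : transpose (transpose p) = p :=
  eq_of_countGE_eq (zero_notMem_transpose _) hp fun _ hm => countGE_transpose_transpose hp hm

lemma transpose_ne_zero {p : Multiset ℕ} (hp : 0 ∉ p) (hne : p ≠ 0) : transpose p ≠ 0 :=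
  fun h => hne (by rw [← transpose_transpose hp, h]; rfl)

lemma psum_transpose {p : Multiset ℕ} (hp : 0 ∉ p) (k : ℕ) :
    psum (transpose p) k = colSum p k := by
  rw [psum_eq_colSum_transpose, transpose_transpose hp]

/-! ### Dominance and parity -/

lemma colSum_le_of_domLE {p q : Multiset ℕ} (hsum : p.sum = q.sum) (h : DomLE q p) (m : ℕ) :
    colSum p m ≤ colSum q m := by
  have h1 := psum_countGE_add_colSum q m
  have h2 := psum_add_colSum_le p (countGE q (m + 1)) m
  have h3 := h (countGE q (m + 1))
  omega

lemma domLE_of_colSum_le {p q : Multiset ℕ} (hp : 0 ∉ p) (hsum : p.sum = q.sum)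
    (h : ∀ m, colSum p m ≤ colSum q m) : DomLE q p := by
  intro k
  set m := countGE (transpose p) (k + 1)
  have h1 := psum_countGE_add_colSum (transpose p) k
  rw [psum_transpose hp, ← psum_eq_colSum_transpose, sum_transpose] at h1
  have h2 := psum_add_colSum_le q k m
  have h3 := h m
  nlinarith

lemma domLE_trans {p q r : Multiset ℕ} (h1 : DomLE p q) (h2 : DomLE q r) : DomLE p r :=
  fun k => (h1 k).trans (h2 k)

lemma eq_of_domLE_of_domLE {p q : Multiset ℕ} (hp : 0 ∉ p) (hq : 0 ∉ q) (hsum : p.sum = q.sum)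
    (h1 : DomLE p q) (h2 : DomLE q p) : p = q := by
  have hcol : ∀ m, colSum p m = colSum q m := fun m =>
    (colSum_le_of_domLE hsum h2 m).antisymm (colSum_le_of_domLE hsum.symm h1 m)
  refine eq_of_countGE_eq hp hq fun m hm => ?_
  obtain ⟨i, rfl⟩ : ∃ i, m = i + 1 := ⟨m - 1, by omega⟩
  have := hcol (i + 1)
  rw [colSum_succ, colSum_succ, hcol i] at this
  omega

lemma domLE_transpose {p q : Multiset ℕ} (hp : 0 ∉ p) (hq : 0 ∉ q) (hsum : p.sum = q.sum)
    (h : DomLE p q) : DomLE (transpose q) (transpose p) := fun k => by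
  rw [psum_transpose hq, psum_transpose hp]
  exact colSum_le_of_domLE hsum.symm h k

/-- Take `j = countGE y (k + 1)`, the equality case of `psum_add_colSum_le` for `y`. -/
lemma domLE_transpose_of_psum_add_psum_le {N : ℕ} {x y : Multiset ℕ} (hy : IsPartitionOf N y)
    (h : ∀ k j, psum x k + psum y j ≤ k * j + N) : DomLE x (transpose y) := fun k => by
  have h1 := psum_countGE_add_colSum y k
  have h2 := h k (countGE y (k + 1))
  rw [psum_transpose hy.2, hy.1] at *
  nlinarith

lemma even_countP_of_even_count {P : ℕ → Prop} [DecidablePred P] {s : Multiset ℕ}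
    (h : ∀ a, P a → Even (s.count a)) : Even (s.countP P) := by
  rw [Multiset.countP_eq_card_filter, ← Multiset.toFinset_sum_count_eq]
  refine Finset.sum_induction _ Even (fun _ _ => Even.add) Even.zero fun a ha => ?_
  have hPa := Multiset.of_mem_filter (Multiset.mem_toFinset.mp ha)
  rw [Multiset.count_filter_of_pos hPa]
  exact h a hPa

lemma sum_map_mod_two_congr {s : Multiset ℕ} {f g : ℕ → ℕ}
    (h : ∀ a ∈ s, f a % 2 = g a % 2) : (s.map f).sum % 2 = (s.map g).sum % 2 := by
  rw [Multiset.sum_nat_mod, Multiset.map_map, Multiset.sum_nat_mod (s.map g), Multiset.map_map]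
  exact congrArg (· % 2) (congrArg Multiset.sum (Multiset.map_congr rfl h))

/-- For odd `m`, each row `a > m` sticks out of the first `m` columns by `a - m`,
which is odd exactly when `a` is even. -/
lemma colSum_add_countP_even_mod_two (p : Multiset ℕ) {m : ℕ} (hm : Odd m) :
    (colSum p m + p.countP fun a => m < a ∧ Even a) % 2 = p.sum % 2 := by
  have hrest : (p.map (· - m)).sum % 2 = (p.countP fun a => m < a ∧ Even a) % 2 := by
    rw [countP_eq_sum_ite]
    refine sum_map_mod_two_congr fun a _ => ?_
    obtain ⟨r, rfl⟩ := hm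
    rcases Nat.even_or_odd a with ⟨b, rfl⟩ | ⟨b, rfl⟩
    · by_cases hlt : 2 * r + 1 < b + b
      · rw [if_pos ⟨hlt, ⟨b, rfl⟩⟩]; omega
      · rw [if_neg fun h => hlt h.1]; omega
    · rw [if_neg fun h => Nat.not_even_iff_odd.mpr ⟨b, rfl⟩ h.2]; omega
  have := colSum_add_sum_sub p m
  omega

lemma colSum_mod_two_of_isOrthogonal {p : Multiset ℕ} (hp : IsOrthogonal p) {m : ℕ}
    (hm : Odd m) : colSum p m % 2 = p.sum % 2 := by
  have h1 := colSum_add_countP_even_mod_two p hm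
  have h2 := Nat.even_iff.mp (even_countP_of_even_count fun a ha => hp a ha.2 :
    Even (p.countP fun a => m < a ∧ Even a))
  omega

lemma countP_even_gt_pred_eq (p : Multiset ℕ) (b : ℕ) (hb : 0 < b) :
    (p.countP fun x => b + b - 1 < x ∧ Even x)
      = (p.countP fun x => b + b + 1 < x ∧ Even x) + p.count (b + b) := by
  induction p using Multiset.induction with
  | empty => simp
  | cons a s ih =>
    rw [Multiset.countP_cons, Multiset.countP_cons, Multiset.count_cons, ih]
    simp only [Nat.even_iff]
    split_ifs <;> omega

lemma isOrthogonal_of_colSum_mod_two {p : Multiset ℕ} (hp : 0 ∉ p)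
    (h : ∀ m, Odd m → colSum p m % 2 = p.sum % 2) : IsOrthogonal p := by
  rintro a ⟨b, rfl⟩
  rcases Nat.eq_zero_or_pos b with rfl | hb
  · rw [Multiset.count_eq_zero_of_notMem hp]
    exact Even.zero
  have hcount : ∀ m, Odd m → (p.countP fun x => m < x ∧ Even x) % 2 = 0 := fun m hm => by
    have := colSum_add_countP_even_mod_two p hm
    have := h m hm
    omega
  have h1 := hcount (b + b - 1) ⟨b - 1, by omega⟩
  have h2 := hcount (b + b + 1) ⟨b, by omega⟩
  have := countP_even_gt_pred_eq p b hb
  rw [Nat.even_iff]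
  omega

lemma mod_two_sum_eq_countP_odd (s : Multiset ℕ) : s.sum % 2 = s.countP (Odd ·) % 2 := by
  rw [countP_eq_sum_ite]
  conv_lhs => rw [← Multiset.map_id' s]
  refine sum_map_mod_two_congr fun a _ => ?_
  rcases Nat.even_or_odd a with h | h
  · rw [if_neg (Nat.not_odd_iff_even.mpr h)]; exact Nat.even_iff.mp h
  · rw [if_pos h]; exact Nat.odd_iff.mp h

lemma even_sum_filter_le_of_isSymplectic {p : Multiset ℕ} (hp : IsSymplectic p) (c : ℕ) :
    Even (p.filter (c ≤ ·)).sum := by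
  rw [Nat.even_iff, mod_two_sum_eq_countP_odd, Multiset.countP_filter, ← Nat.even_iff]
  exact even_countP_of_even_count fun a ha => hp a ha.1

lemma even_countP_odd_of_isSymplectic {p : Multiset ℕ} (hp : IsSymplectic p) :
    Even (p.countP (Odd ·)) :=
  even_countP_of_even_count hp

/-! ### The orthogonal collapse -/

/-- The partition whose `(v + 1)`-st column has length `c v` for `v < B`. -/
def ofColumns (c : ℕ → ℕ) (B : ℕ) : Multiset ℕ :=
  (Multiset.range B).bind fun v => Multiset.replicate (c v - c (v + 1)) (v + 1)

lemma zero_notMem_ofColumns (c : ℕ → ℕ) (B : ℕ) : 0 ∉ ofColumns c B := by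
  simp [ofColumns, Multiset.mem_replicate]

lemma le_of_mem_ofColumns {c : ℕ → ℕ} {B a : ℕ} (h : a ∈ ofColumns c B) : a ≤ B := by
  simp only [ofColumns, Multiset.mem_bind, Multiset.mem_range, Multiset.mem_replicate] at h
  omega

lemma countGE_replicate (n a m : ℕ) :
    countGE (Multiset.replicate n a) m = if m ≤ a then n else 0 := by
  induction n with
  | zero => simp [countGE]
  | succ n ih =>
    rw [Multiset.replicate_succ, countGE_cons, ih]
    split_ifs <;> rfl

lemma countGE_ofColumns {c : ℕ → ℕ} (hc : Antitone c) (B u : ℕ) :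
    countGE (ofColumns c B) (u + 1) = c u - c B := by
  induction B with
  | zero => simp [ofColumns, countGE, hc (Nat.zero_le u)]
  | succ B ih =>
    rw [ofColumns, Multiset.range_succ, Multiset.cons_bind, ← ofColumns, countGE,
      Multiset.countP_add]
    change countGE (Multiset.replicate _ _) (u + 1) + countGE (ofColumns c B) (u + 1) = _
    rw [ih, countGE_replicate]
    have := hc (show B ≤ B + 1 by omega)
    split_ifs with h
    · have := hc (show u ≤ B by omega); omega
    · have := hc (show B + 1 ≤ u by omega); omega

lemma exists_colSum_eq {N : ℕ} {f : ℕ → ℕ} (hf0 : f 0 = 0) (hmono : Monotone f)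
    (hconc : ∀ m, f (m + 2) + f m ≤ f (m + 1) + f (m + 1)) (htop : ∀ m, N ≤ m → f m = N) :
    ∃ q, IsPartitionOf N q ∧ ∀ m, colSum q m = f m := by
  set c := fun v => f (v + 1) - f v
  have hc : Antitone c := antitone_nat_of_succ_le fun v => by
    show f (v + 2) - f (v + 1) ≤ f (v + 1) - f v
    have := hmono (Nat.le_succ (v + 1))
    have := hmono (Nat.le_succ v)
    have := hconc v
    omega
  have hcN : c N = 0 := by simp [c, htop N le_rfl, htop (N + 1) (Nat.le_succ N)]
  have hcol : ∀ m, colSum (ofColumns c N) m = f m := fun m => by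
    simp only [colSum, countGE_ofColumns hc, hcN, Nat.sub_zero, c]
    rw [Finset.sum_range_tsub hmono, hf0, Nat.sub_zero]
  have hsum : (ofColumns c N).sum = N := by
    rw [← colSum_eq_sum_of_forall_le fun _ => le_of_mem_ofColumns, hcol, htop N le_rfl]
  exact ⟨ofColumns c N, ⟨hsum, zero_notMem_ofColumns c N⟩, hcol⟩

lemma isPartitionOf_replicate_one (N : ℕ) : IsPartitionOf N (Multiset.replicate N 1) :=
  ⟨by simp, by simp [Multiset.mem_replicate]⟩

lemma isOrthogonal_replicate_one (N : ℕ) : IsOrthogonal (Multiset.replicate N 1) := by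
  intro a ha
  rw [Multiset.count_replicate]
  split_ifs with h
  · exact absurd (h ▸ ha) Nat.not_even_one
  · exact Even.zero

lemma domLE_replicate_one {N : ℕ} {y : Multiset ℕ} (hy : IsPartitionOf N y) :
    DomLE (Multiset.replicate N 1) y := by
  refine domLE_of_colSum_le hy.2 (by simp [hy.1]) fun m => ?_
  rcases Nat.eq_zero_or_pos m with rfl | hm
  · exact le_rfl
  · rw [colSum_eq_sum_of_forall_le fun a ha => (Multiset.eq_of_mem_replicate ha).le.trans hm]
    simpa [hy.1] using colSum_le_sum y m

/-- The column sums of the collapse are the pointwise minima of the column sums of the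
orthogonal partitions below `y`; these minima stay concave because at `m + 1` the minimum is
attained by one such partition, whose own concavity bounds the values at `m` and `m + 2`. -/
theorem exists_isCollapseOf_isOrthogonal {N : ℕ} {y : Multiset ℕ} (hy : IsPartitionOf N y) :
    ∃ c, IsCollapseOf IsOrthogonal N y c := by
  set Below := fun q => IsPartitionOf N q ∧ IsOrthogonal q ∧ DomLE q y
  have hones : Below (Multiset.replicate N 1) :=
    ⟨isPartitionOf_replicate_one N, isOrthogonal_replicate_one N, domLE_replicate_one hy⟩
  set f : ℕ → ℕ := fun m => sInf {t | ∃ q, Below q ∧ colSum q m = t}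
  have hmem : ∀ m, ∃ q, Below q ∧ colSum q m = f m := fun m =>
    Nat.sInf_mem (s := {t | ∃ q, Below q ∧ colSum q m = t}) ⟨_, _, hones, rfl⟩
  have hle : ∀ q, Below q → ∀ m, f m ≤ colSum q m := fun q hq m => Nat.sInf_le ⟨q, hq, rfl⟩
  have hmono : Monotone f := monotone_nat_of_le_succ fun m => by
    obtain ⟨q, hq, hqm⟩ := hmem (m + 1)
    exact (hle q hq m).trans (hqm ▸ colSum_mono q (Nat.le_succ m))
  have hconc : ∀ m, f (m + 2) + f m ≤ f (m + 1) + f (m + 1) := fun m => by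
    obtain ⟨q, hq, hqm⟩ := hmem (m + 1)
    have := hle q hq m
    have := hle q hq (m + 2)
    have := colSum_concave q m
    omega
  have htop : ∀ m, N ≤ m → f m = N := fun m hm => by
    obtain ⟨q, hq, hqm⟩ := hmem m
    rw [← hqm, colSum_eq_sum (hq.1.1.trans_le hm), hq.1.1]
  obtain ⟨c, hc, hcol⟩ := exists_colSum_eq (Nat.le_zero.mp (hle _ hones 0)) hmono hconc htop
  have hdom : ∀ q, IsPartitionOf N q → (∀ m, f m ≤ colSum q m) → DomLE q c := fun q hq h =>
    domLE_of_colSum_le hc.2 (hc.1.trans hq.1.symm) fun m => hcol m ▸ h m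
  refine ⟨c, hc, ?_, domLE_of_colSum_le hy.2 (hy.1.trans hc.1.symm) fun m => ?_,
    fun q hq hqo hqy => hdom q hq (hle q ⟨hq, hqo, hqy⟩)⟩
  · refine isOrthogonal_of_colSum_mod_two hc.2 fun m hm => ?_
    obtain ⟨q, hq, hqm⟩ := hmem m
    rw [hcol, ← hqm, hc.1, ← hq.1.1]
    exact colSum_mod_two_of_isOrthogonal hq.2.1 hm
  · obtain ⟨q, hq, hqm⟩ := hmem m
    exact hcol m ▸ hqm ▸ colSum_le_of_domLE (hy.1.trans hq.1.1.symm) hq.2.2 m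

lemma orthCollapse_spec {N : ℕ} {y : Multiset ℕ} (hy : IsPartitionOf N y) :
    IsCollapseOf IsOrthogonal N y (orthCollapse N y) := by
  have hex := exists_isCollapseOf_isOrthogonal hy
  rw [orthCollapse, collapseOf, dif_pos hex]
  exact hex.choose_spec

/-! ### Duality and expansion -/

/-- Spaltenstein's duality map `y ↦ (yᵗ)_{SO_N}`. -/
noncomputable def orthDual (N : ℕ) (y : Multiset ℕ) : Multiset ℕ := orthCollapse N (transpose y)

section OrthDual

variable {N : ℕ} {y : Multiset ℕ}

lemma orthDual_spec (hy : IsPartitionOf N y) :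
    IsCollapseOf IsOrthogonal N (transpose y) (orthDual N y) :=
  orthCollapse_spec (isPartitionOf_transpose hy)

lemma isPartitionOf_orthDual (hy : IsPartitionOf N y) : IsPartitionOf N (orthDual N y) :=
  (orthDual_spec hy).1

lemma isOrthogonal_orthDual (hy : IsPartitionOf N y) : IsOrthogonal (orthDual N y) :=
  (orthDual_spec hy).2.1

lemma orthDual_anti {p q : Multiset ℕ} (hp : IsPartitionOf N p) (hq : IsPartitionOf N q)
    (h : DomLE p q) : DomLE (orthDual N q) (orthDual N p) :=
  (orthDual_spec hp).2.2.2 _ (isPartitionOf_orthDual hq) (isOrthogonal_orthDual hq)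
    (domLE_trans (orthDual_spec hq).2.2.1 (domLE_transpose hp.2 hq.2 (hp.1.trans hq.1.symm) h))

lemma domLE_orthDual_orthDual (hy : IsPartitionOf N y) (hyo : IsOrthogonal y) :
    DomLE y (orthDual N (orthDual N y)) := by
  have hdy := isPartitionOf_orthDual hy
  have h := domLE_transpose hdy.2 (zero_notMem_transpose y)
    (hdy.1.trans (sum_transpose y ▸ hy.1).symm) (orthDual_spec hy).2.2.1
  rw [transpose_transpose hy.2] at h
  exact (orthDual_spec hdy).2.2.2 y hy hyo h

lemma orthDual_orthDual_orthDual (hy : IsPartitionOf N y) (hyo : IsOrthogonal y) :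
    orthDual N (orthDual N (orthDual N y)) = orthDual N y := by
  have hdy := isPartitionOf_orthDual hy
  have hd2y := isPartitionOf_orthDual hdy
  have hd3y := isPartitionOf_orthDual hd2y
  exact eq_of_domLE_of_domLE hd3y.2 hdy.2 (hd3y.1.trans hdy.1.symm)
    (orthDual_anti hy hd2y (domLE_orthDual_orthDual hy hyo))
    (domLE_orthDual_orthDual hdy (isOrthogonal_orthDual hy))

lemma isSpecialOrth_orthDual_orthDual (hy : IsPartitionOf N y) :
    IsSpecialOrth N (orthDual N (orthDual N y)) :=
  orthDual_orthDual_orthDual (isPartitionOf_orthDual hy) (isOrthogonal_orthDual hy)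

lemma orthExpansion_eq (hy : IsPartitionOf N y) (hyo : IsOrthogonal y) :
    orthExpansion N y = orthDual N (orthDual N y) := by
  set e := orthDual N (orthDual N y)
  have he := isPartitionOf_orthDual (isPartitionOf_orthDual hy)
  have hspec : IsExpansionOf IsOrthogonal (IsSpecialOrth N) N y e := by
    refine ⟨he, isOrthogonal_orthDual (isPartitionOf_orthDual hy),
      isSpecialOrth_orthDual_orthDual hy, domLE_orthDual_orthDual hy hyo,
      fun q hq _ hqs hyq => ?_⟩
    have := orthDual_anti (isPartitionOf_orthDual hq) (isPartitionOf_orthDual hy)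
      (orthDual_anti hy hq hyq)
    rwa [show orthDual N (orthDual N q) = q from hqs] at this
  have hex : ∃ w, IsExpansionOf IsOrthogonal (IsSpecialOrth N) N y w := ⟨e, hspec⟩
  have hchoose := hex.choose_spec
  rw [orthExpansion, expansionOf, dif_pos hex]
  exact eq_of_domLE_of_domLE hchoose.1.2 he.2 (hchoose.1.1.trans he.1.symm)
    (hchoose.2.2.2.2 e hspec.1 hspec.2.1 hspec.2.2.1 hspec.2.2.2.1)
    (hspec.2.2.2.2 _ hchoose.1 hchoose.2.1 hchoose.2.2.1 hchoose.2.2.2.1)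

end OrthDual

/-! ### Enlarging the largest part -/

section PPlus

variable {x : Multiset ℕ}

lemma lt_maxPart_iff (x : Multiset ℕ) (j : ℕ) : j < maxPart x ↔ ∃ a ∈ x, j < a := by
  have hmax : maxPart x = (Multiset.range x.sum).countP fun j => 0 < countGE x (j + 1) := by
    rw [maxPart, psum_eq_sum_min, countP_range]
    exact Finset.sum_congr rfl fun j _ => by split_ifs <;> omega
  rw [hmax, lt_countP_range_iff fun u v huv hv => hv.trans_le (countGE_anti x (by omega)),
    countGE, Multiset.countP_pos]
  refine ⟨fun h => h.2, fun ⟨a, ha, hja⟩ => ⟨?_, a, ha, hja⟩⟩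
  have := Multiset.le_sum_of_mem ha
  omega

lemma le_maxPart {a : ℕ} (ha : a ∈ x) : a ≤ maxPart x :=
  not_lt.mp fun h => lt_irrefl _ ((lt_maxPart_iff x _).mpr ⟨a, ha, h⟩)

lemma maxPart_mem (hne : x ≠ 0) : maxPart x ∈ x := by
  obtain ⟨a, ha⟩ := Multiset.exists_mem_of_ne_zero hne
  rcases Nat.eq_zero_or_pos (maxPart x) with h0 | hpos
  · rwa [h0, ← Nat.le_zero.mp (h0 ▸ le_maxPart ha)]
  obtain ⟨b, hb, hlt⟩ := (lt_maxPart_iff x (maxPart x - 1)).mp (by omega)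
  rwa [← (le_maxPart hb).antisymm (by omega)]

lemma countGE_maxPart_succ (x : Multiset ℕ) : countGE x (maxPart x + 1) = 0 :=
  Multiset.countP_eq_zero.mpr fun _ ha h => by have := le_maxPart ha; omega

lemma pPlus_eq_cons_erase (x : Multiset ℕ) :
    pPlus x = (maxPart x + 1) ::ₘ x.erase (maxPart x) := rfl

lemma sum_pPlus (hne : x ≠ 0) : (pPlus x).sum = x.sum + 1 := by
  conv_rhs => rw [← Multiset.cons_erase (maxPart_mem hne)]
  rw [pPlus_eq_cons_erase, Multiset.sum_cons, Multiset.sum_cons]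
  ring

lemma isPartitionOf_pPlus {N : ℕ} (hx : IsPartitionOf N x) (hne : x ≠ 0) :
    IsPartitionOf (N + 1) (pPlus x) := by
  refine ⟨by rw [sum_pPlus hne, hx.1], fun h => ?_⟩
  rcases Multiset.mem_cons.mp h with h | h
  · omega
  · exact hx.2 (Multiset.mem_of_mem_erase h)

lemma countGE_pPlus (hne : x ≠ 0) (u : ℕ) :
    countGE (pPlus x) u = countGE x u + if u = maxPart x + 1 then 1 else 0 := by
  have h1 := countGE_cons (maxPart x) (x.erase (maxPart x)) u
  rw [Multiset.cons_erase (maxPart_mem hne)] at h1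
  have h2 := countGE_cons (maxPart x + 1) (x.erase (maxPart x)) u
  rw [← pPlus_eq_cons_erase] at h2
  have h3 := countGE_maxPart_succ x
  split_ifs at h1 h2 ⊢ <;> omega

lemma colSum_pPlus (hne : x ≠ 0) (m : ℕ) :
    colSum (pPlus x) m = colSum x m + if maxPart x < m then 1 else 0 := by
  simp only [colSum, countGE_pPlus hne, Nat.add_right_cancel_iff, Finset.sum_add_distrib,
    Finset.sum_ite_eq', Finset.mem_range]

lemma psum_pPlus (hne : x ≠ 0) {k : ℕ} (hk : 1 ≤ k) : psum (pPlus x) k = psum x k + 1 := by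
  have hterm : ∀ j, min k (countGE (pPlus x) (j + 1))
      = min k (countGE x (j + 1)) + if maxPart x = j then 1 else 0 := fun j => by
    rw [countGE_pPlus hne]
    by_cases h : maxPart x = j
    · subst h
      simp [countGE_maxPart_succ, hk]
    · simp [h, Ne.symm h]
  have hmax := Multiset.le_sum_of_mem (maxPart_mem hne)
  rw [psum_eq_sum_min, psum_eq_sum_min, sum_pPlus hne, Finset.sum_congr rfl fun j _ => hterm j,
    Finset.sum_add_distrib, Finset.sum_ite_eq, if_pos (Finset.mem_range.mpr (by omega)),
    Finset.sum_range_succ, countGE_eq_zero_of_sum_lt (Nat.lt_succ_self _), min_zero, add_zero]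

end PPlus

/-- The correction making `g` agree with `N` mod 2 at odd places: raise each odd place of
the wrong parity by one, and an even place when both of its neighbours were raised, so that
monotonicity and concavity survive. -/
def parityLift (g : ℕ → ℕ) (N m : ℕ) : ℕ :=
  if m % 2 = 1 then (if g m % 2 = N % 2 then 0 else 1)
  else if m ≠ 0 ∧ g (m - 1) % 2 ≠ N % 2 ∧ g (m + 1) % 2 ≠ N % 2 then 1 else 0

section ParityLift

variable {g : ℕ → ℕ} {N : ℕ}

lemma parityLift_le_one (m : ℕ) : parityLift g N m ≤ 1 := by
  unfold parityLift
  split_ifs <;> omega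

lemma parityLift_zero : parityLift g N 0 = 0 := by simp [parityLift]

lemma parityLift_of_odd {m : ℕ} (hm : m % 2 = 1) :
    parityLift g N m = if g m % 2 = N % 2 then 0 else 1 := if_pos hm

lemma parityLift_of_even {m : ℕ} (hm : m % 2 = 0) :
    parityLift g N m =
      if m ≠ 0 ∧ g (m - 1) % 2 ≠ N % 2 ∧ g (m + 1) % 2 ≠ N % 2 then 1 else 0 :=
  if_neg (by omega)

lemma add_parityLift_mod_two {m : ℕ} (hm : m % 2 = 1) :
    (g m + parityLift g N m) % 2 = N % 2 := by
  rw [parityLift_of_odd hm]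
  split_ifs <;> omega

lemma parityLift_eq_zero_of_eq (hmono : Monotone g) (hle : ∀ m, g m ≤ N) {m : ℕ}
    (hgm : g m = N) : parityLift g N m = 0 := by
  rcases Nat.mod_two_eq_zero_or_one m with h | h
  · have := (hle (m + 1)).antisymm (hgm ▸ hmono (Nat.le_succ m))
    rw [parityLift_of_even h, if_neg (by omega)]
  · rw [parityLift_of_odd h, if_pos (by rw [hgm])]

lemma add_parityLift_mono (hmono : Monotone g)
    (hconc : ∀ m, g (m + 2) + g m ≤ g (m + 1) + g (m + 1)) (m : ℕ) :
    g m + parityLift g N m ≤ g (m + 1) + parityLift g N (m + 1) := by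
  have h01 : g m ≤ g (m + 1) := hmono (by omega)
  have h12 : g (m + 1) ≤ g (m + 2) := hmono (by omega)
  have hc := hconc m
  rcases Nat.mod_two_eq_zero_or_one m with h | h
  · rw [parityLift_of_even h, parityLift_of_odd (m := m + 1) (by omega)]
    split_ifs <;> omega
  · rw [parityLift_of_odd h, parityLift_of_even (m := m + 1) (by omega)]
    simp only [Nat.add_sub_cancel, show m + 1 + 1 = m + 2 by omega]
    split_ifs <;> omega

lemma add_parityLift_concave (hconc : ∀ m, g (m + 2) + g m ≤ g (m + 1) + g (m + 1)) (m : ℕ) :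
    (g (m + 2) + parityLift g N (m + 2)) + (g m + parityLift g N m)
      ≤ (g (m + 1) + parityLift g N (m + 1)) + (g (m + 1) + parityLift g N (m + 1)) := by
  have hc := hconc m
  rcases Nat.mod_two_eq_zero_or_one m with h | h
  · rw [parityLift_of_even h, parityLift_of_odd (m := m + 1) (by omega),
      parityLift_of_even (m := m + 2) (by omega)]
    simp only [show m + 2 - 1 = m + 1 by omega]
    split_ifs <;> omega
  · rw [parityLift_of_odd h, parityLift_of_even (m := m + 1) (by omega),
      parityLift_of_odd (m := m + 2) (by omega)]
    simp only [Nat.add_sub_cancel, show m + 1 + 1 = m + 2 by omega]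
    split_ifs <;> omega

end ParityLift

lemma exists_isOrthogonal_domLE_colSum_le_succ {N : ℕ} {b : Multiset ℕ}
    (hb : IsPartitionOf N b) :
    ∃ q, IsPartitionOf N q ∧ IsOrthogonal q ∧ DomLE q b ∧ ∀ m, colSum q m ≤ colSum b m + 1 := by
  set g := colSum b
  have hmono : Monotone g := fun _ _ => colSum_mono b
  have hle : ∀ m, g m ≤ N := fun m => hb.1 ▸ colSum_le_sum b m
  have htop : ∀ m, N ≤ m → g m = N := fun m hm => by
    simp only [g, colSum_eq_sum (hb.1.trans_le hm), hb.1]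
  obtain ⟨q, hq, hcol⟩ := exists_colSum_eq (N := N) (f := fun m => g m + parityLift g N m)
    (by simp [g, colSum_zero, parityLift_zero])
    (monotone_nat_of_le_succ (add_parityLift_mono hmono (colSum_concave b)))
    (add_parityLift_concave (colSum_concave b))
    fun m hm => by rw [htop m hm, parityLift_eq_zero_of_eq hmono hle (htop m hm), Nat.add_zero]
  refine ⟨q, hq, isOrthogonal_of_colSum_mod_two hq.2 fun m hm => ?_,
    domLE_of_colSum_le hb.2 (hb.1.trans hq.1.symm) fun m => hcol m ▸ Nat.le_add_right _ _,
    fun m => hcol m ▸ Nat.add_le_add_left (parityLift_le_one m) _⟩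
  rw [hcol, hq.1]
  exact add_parityLift_mod_two (Nat.odd_iff.mp hm)

lemma colSum_orthCollapse_le_succ {N : ℕ} {b : Multiset ℕ} (hb : IsPartitionOf N b) (m : ℕ) :
    colSum (orthCollapse N b) m ≤ colSum b m + 1 := by
  obtain ⟨q, hq, hqo, hqb, hqm⟩ := exists_isOrthogonal_domLE_colSum_le_succ hb
  have hc := orthCollapse_spec hb
  exact (colSum_le_of_domLE (hc.1.1.trans hq.1.symm) (hc.2.2.2 q hq hqo hqb) m).trans (hqm m)

lemma colSum_orthCollapse_pPlus_le {N : ℕ} {x : Multiset ℕ} (hx : IsPartitionOf N x)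
    (hne : x ≠ 0) (m : ℕ) : colSum (orthCollapse (N + 1) (pPlus x)) m ≤ colSum x m + 1 := by
  have hb := isPartitionOf_pPlus hx hne
  have h := colSum_orthCollapse_le_succ hb m
  rw [colSum_pPlus hne] at h
  split_ifs at h with hm
  · have := colSum_le_sum (orthCollapse (N + 1) (pPlus x)) m
    rw [(orthCollapse_spec hb).1.1] at this
    rw [colSum_eq_sum_of_forall_le fun a ha => (le_maxPart ha).trans hm.le, hx.1]
    exact this
  · exact h

/-! ### The key inequality -/

lemma le_countGE_of_psum_add_colSum_eq {p : Multiset ℕ} {j k : ℕ} (hk : 1 ≤ k)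
    (h : psum p j + colSum p k = j * k + p.sum) : j ≤ countGE p k := by
  obtain ⟨k, rfl⟩ : ∃ k', k = k' + 1 := ⟨k - 1, by omega⟩
  have := psum_add_colSum_le p j k
  rw [colSum_succ] at h
  nlinarith

lemma countGE_succ_le_of_psum_add_colSum_eq {p : Multiset ℕ} {j k : ℕ}
    (h : psum p j + colSum p k = j * k + p.sum) : countGE p (k + 1) ≤ j := by
  have := psum_add_colSum_le p j (k + 1)
  rw [colSum_succ] at this
  nlinarith

lemma sum_filter_lt_eq (p : Multiset ℕ) (k : ℕ) :
    (p.filter (k + 1 ≤ ·)).sum = (p.map (· - k)).sum + k * countGE p (k + 1) := by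
  induction p using Multiset.induction with
  | empty => simp [countGE]
  | cons a s ih =>
    rw [Multiset.filter_cons, Multiset.map_cons, Multiset.sum_cons, countGE_cons,
      Multiset.sum_add, ih]
    split_ifs with h
    · simp only [Multiset.sum_singleton, mul_add, mul_one]
      omega
    · simp only [Multiset.sum_zero, add_zero]
      omega

lemma psum_countGE_eq_sum_filter (p : Multiset ℕ) (k : ℕ) :
    psum p (countGE p (k + 1)) = (p.filter (k + 1 ≤ ·)).sum := by
  have h1 := psum_countGE_add_colSum p k
  have h2 := colSum_add_sum_sub p k
  have h3 := sum_filter_lt_eq p k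
  nlinarith

lemma even_sum_of_isSymplectic {p : Multiset ℕ} (hp : IsSymplectic p) : Even p.sum := by
  simpa using even_sum_filter_le_of_isSymplectic hp 0

lemma even_psum_countGE_succ {p : Multiset ℕ} (hp : IsSymplectic p) (k : ℕ) :
    Even (psum p (countGE p (k + 1))) :=
  psum_countGE_eq_sum_filter p k ▸ even_sum_filter_le_of_isSymplectic hp (k + 1)

lemma colSum_mod_two_of_isSymplectic {p : Multiset ℕ} (hp : IsSymplectic p) (k : ℕ) :
    colSum p k % 2 = countGE p (k + 1) * k % 2 := by
  have h1 := psum_countGE_add_colSum p k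
  have h2 := Nat.even_iff.mp (even_psum_countGE_succ hp k)
  have h3 := Nat.even_iff.mp (even_sum_of_isSymplectic hp)
  omega

lemma le_maxPart_of_countGE_pos {p : Multiset ℕ} {k : ℕ} (h : 0 < countGE p k) :
    k ≤ maxPart p := by
  obtain ⟨a, ha, hka⟩ := Multiset.countP_pos.mp h
  exact hka.trans (le_maxPart ha)

/-- In the equality case of `psum_add_colSum_le` for a symplectic `p`, some odd row or odd column
index has the even partial sum that `psum_orthCollapse_pPlus_add_colSum_lt` needs. -/
lemma exists_odd_of_psum_add_colSum_eq {p : Multiset ℕ} (hsymp : IsSymplectic p) {j k : ℕ}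
    (hk : 1 ≤ k) (hj : 1 ≤ j) (htight : psum p j + colSum p k = j * k + p.sum) :
    (∃ m, Odd m ∧ m ≤ countGE p k ∧ Even (psum p m) ∧
        psum p m + colSum p k = m * k + p.sum) ∨
      (∃ m, Odd m ∧ m ≤ maxPart p ∧ Even (colSum p m) ∧
        colSum p k + m * j = colSum p m + k * j) := by
  set j₀ := countGE p (k + 1)
  have hj₀ : j₀ ≤ j := countGE_succ_le_of_psum_add_colSum_eq htight
  have hj₁ : j ≤ countGE p k := le_countGE_of_psum_add_colSum_eq hk htight
  have hblock : ∀ m, j₀ ≤ m → m ≤ countGE p k → psum p m + colSum p k = m * k + p.sum :=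
    fun m h₀ h₁ => psum_add_colSum_eq h₀ h₁
  have hS := Nat.even_iff.mp (even_sum_of_isSymplectic hsymp)
  have hCk : colSum p k % 2 = j₀ * k % 2 := colSum_mod_two_of_isSymplectic hsymp k
  have hmul : ∀ a b, b % 2 = 0 → a * b % 2 = 0 := fun a b hb => by
    rw [Nat.mul_mod, hb, mul_zero, Nat.zero_mod]
  rcases Nat.mod_two_eq_zero_or_one k with hke | hko
  · have hPblock : ∀ m, j₀ ≤ m → m ≤ countGE p k → Even (psum p m) := fun m h₀ h₁ => by
      have := hblock m h₀ h₁
      have := hmul m k hke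
      have := hmul j₀ k hke
      exact Nat.even_iff.mpr (by omega)
    rcases Nat.mod_two_eq_zero_or_one j with hje | hjo
    · rcases hj₁.lt_or_eq with hlt | heq
      · exact .inl ⟨j + 1, Nat.odd_iff.mpr (by omega), hlt, hPblock _ (by omega) hlt,
          hblock _ (by omega) hlt⟩
      · have hmax := le_maxPart_of_countGE_pos (p := p) (k := k) (by omega)
        have := hmul j₀ k hke
        obtain ⟨k, rfl⟩ : ∃ k', k = k' + 1 := ⟨k - 1, by omega⟩
        have hcol := colSum_succ p k
        rw [← heq] at hcol
        refine .inr ⟨k, Nat.odd_iff.mpr (by omega), by omega, Nat.even_iff.mpr (by omega), ?_⟩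
        rw [hcol]
        ring
    · exact .inl ⟨j, Nat.odd_iff.mpr hjo, hj₁, hPblock j hj₀ hj₁, htight⟩
  · rcases Nat.mod_two_eq_zero_or_one j₀ with hj₀e | hj₀o
    · have := hmul k j₀ hj₀e
      rw [mul_comm] at this
      exact .inr ⟨k, Nat.odd_iff.mpr hko, le_maxPart_of_countGE_pos (by omega),
        Nat.even_iff.mpr (by omega), rfl⟩
    · exact .inl ⟨j₀, Nat.odd_iff.mpr hj₀o, hj₀.trans hj₁, even_psum_countGE_succ hsymp k,
        hblock j₀ le_rfl (hj₀.trans hj₁)⟩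

lemma maxPart_transpose {p : Multiset ℕ} (hp : 0 ∉ p) : maxPart (transpose p) = countGE p 1 :=
  (psum_transpose hp 1).trans (Finset.sum_range_one _)

lemma psum_orthCollapse_pPlus_le {N : ℕ} {x : Multiset ℕ} (hx : IsPartitionOf N x)
    (hne : x ≠ 0) {k : ℕ} (hk : 1 ≤ k) :
    psum (orthCollapse (N + 1) (pPlus x)) k ≤ psum x k + 1 :=
  ((orthCollapse_spec (isPartitionOf_pPlus hx hne)).2.2.1 k).trans_eq (psum_pPlus hne hk)

/-- At an odd column, an orthogonal partition of an odd number has an odd column sum, so it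
exceeds an even column sum of a partition above it. -/
lemma psum_add_colSum_lt_of_isOrthogonal {N : ℕ} (hN : Odd N) {z y : Multiset ℕ}
    (hz : IsPartitionOf N z) (hzo : IsOrthogonal z) (hy : IsPartitionOf N y) (hzy : DomLE z y)
    {m : ℕ} (hm : Odd m) (hym : Even (colSum y m)) (k : ℕ) : psum z k + colSum y m < k * m + N := by
  have h1 := psum_add_colSum_le z k m
  have h2 := colSum_mod_two_of_isOrthogonal hzo hm
  have h3 := colSum_le_of_domLE (hy.1.trans hz.1.symm) hzy m
  rw [hz.1] at h1 h2
  rw [Nat.odd_iff] at hN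
  rw [Nat.even_iff] at hym
  omega

lemma psum_orthCollapse_pPlus_add_colSum_lt {N : ℕ} (hN : Even N) {x : Multiset ℕ}
    (hx : IsPartitionOf N x) (hne : x ≠ 0) {m : ℕ} (hm : Odd m) (hmx : m ≤ maxPart x)
    (hxm : Even (colSum x m)) (k : ℕ) :
    psum (orthCollapse (N + 1) (pPlus x)) k + colSum x m < k * m + (N + 1) := by
  have hb := isPartitionOf_pPlus hx hne
  have hc := orthCollapse_spec hb
  have h := psum_add_colSum_lt_of_isOrthogonal hN.add_one hc.1 hc.2.1 hb hc.2.2.1 hm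
    (by rwa [colSum_pPlus hne, if_neg (by omega), Nat.add_zero]) k
  rwa [colSum_pPlus hne, if_neg (by omega), Nat.add_zero] at h

/-- Outside the equality case of `psum_add_colSum_le` for `p` the
bound is immediate, and in the equality case one of the two collapses loses a box to parity. -/
theorem psum_orthCollapse_add_psum_orthCollapse_le {n : ℕ} {p : Multiset ℕ}
    (hp : IsPartitionOf (2 * n) p) (hne : p ≠ 0) (hsymp : IsSymplectic p) (k j : ℕ) :
    psum (orthCollapse (2 * n + 1) (pPlus (transpose p))) k
      + psum (orthCollapse (2 * n + 1) (pPlus p)) j ≤ k * j + (2 * n + 1) := by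
  have hpt := isPartitionOf_transpose hp
  have hptne := transpose_ne_zero hp.2 hne
  have hA := (orthCollapse_spec (isPartitionOf_pPlus hpt hptne)).1.1
  have hB := (orthCollapse_spec (isPartitionOf_pPlus hp hne)).1.1
  rcases Nat.eq_zero_or_pos k with rfl | hk
  · have := psum_le_sum (orthCollapse (2 * n + 1) (pPlus p)) j
    simp only [psum_zero]
    omega
  rcases Nat.eq_zero_or_pos j with rfl | hj
  · have := psum_le_sum (orthCollapse (2 * n + 1) (pPlus (transpose p))) k
    simp only [psum_zero]
    omega
  have hAk := psum_orthCollapse_pPlus_le hpt hptne hk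
  rw [psum_transpose hp.2] at hAk
  have hBj := psum_orthCollapse_pPlus_le hp hne hj
  have hbase := psum_add_colSum_le p j k
  have hjk := mul_comm j k
  have hS := hp.1
  by_cases htight : psum p j + colSum p k = j * k + p.sum
  · rcases exists_odd_of_psum_add_colSum_eq hsymp hk hj htight with
      ⟨m, hm, hmk, hPm, hm_tight⟩ | ⟨m, hm, hmx, hCm, hid⟩
    · have hmx : m ≤ maxPart (transpose p) := by
        rw [maxPart_transpose hp.2]
        exact hmk.trans (countGE_anti p hk)
      have := psum_orthCollapse_pPlus_add_colSum_lt (even_two_mul n) hpt hptne hm hmx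
        (psum_eq_colSum_transpose p m ▸ hPm) k
      rw [← psum_eq_colSum_transpose] at this
      have := mul_comm m k
      omega
    · have := psum_orthCollapse_pPlus_add_colSum_lt (even_two_mul n) hp hne hm hmx hCm j
      have := mul_comm m j
      omega
  · omega

lemma orthDual_eq_orthCollapse {N : ℕ} {a B : Multiset ℕ} (ha : IsPartitionOf N a)
    (hB : IsPartitionOf N B) (hBa : DomLE (transpose B) a)
    (hkey : ∀ k j, psum (orthCollapse N a) k + psum B j ≤ k * j + N) :
    orthDual N B = orthCollapse N a := by
  have hD := orthDual_spec hB
  have hA := orthCollapse_spec ha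
  exact eq_of_domLE_of_domLE hD.1.2 hA.1.2 (hD.1.1.trans hA.1.1.symm)
    (hA.2.2.2 _ hD.1 hD.2.1 (domLE_trans hD.2.2.1 hBa))
    (hD.2.2.2 _ hA.1 hA.2.1 (domLE_transpose_of_psum_add_psum_le hB hkey))

lemma orthDual_orthCollapse_pPlus {N : ℕ} {x : Multiset ℕ} (hx : IsPartitionOf N x)
    (hne : x ≠ 0)
    (hkey : ∀ k j, psum (orthCollapse (N + 1) (pPlus (transpose x))) k
      + psum (orthCollapse (N + 1) (pPlus x)) j ≤ k * j + (N + 1)) :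
    orthDual (N + 1) (orthCollapse (N + 1) (pPlus x))
      = orthCollapse (N + 1) (pPlus (transpose x)) := by
  have hxt := isPartitionOf_transpose hx
  have hxtne := transpose_ne_zero hx.2 hne
  have hb := orthCollapse_spec (isPartitionOf_pPlus hx hne)
  refine orthDual_eq_orthCollapse (isPartitionOf_pPlus hxt hxtne) hb.1 (fun k => ?_) hkey
  rcases Nat.eq_zero_or_pos k with rfl | hk
  · simp [psum_zero]
  rw [psum_transpose hb.1.2, psum_pPlus hxtne hk, psum_transpose hx.2]
  exact colSum_orthCollapse_pPlus_le hx hne k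

lemma two_mul_sum_map_div_two_add_countP_odd (p : Multiset ℕ) :
    2 * (p.map (· / 2)).sum + p.countP (Odd ·) = p.sum := by
  induction p using Multiset.induction with
  | empty => simp
  | cons a s ih =>
    rw [Multiset.map_cons, Multiset.sum_cons, Multiset.countP_cons, Multiset.sum_cons]
    rcases Nat.even_or_odd a with ha | ha
    · rw [if_neg (Nat.not_odd_iff_even.mpr ha)]
      have := Nat.even_iff.mp ha
      omega
    · rw [if_pos ha]
      have := Nat.odd_iff.mp ha
      omega

lemma isPartitionOf_qqm {n : ℕ} {p : Multiset ℕ} (hp : IsPartitionOf (2 * n) p)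
    (hsymp : IsSymplectic p) : IsPartitionOf (2 * n + 1) (qqm (pOne p) (2 * nStar p + 1)) := by
  rw [qqm, if_neg (by omega)]
  refine ⟨?_, fun h => ?_⟩
  · have h1 := two_mul_sum_map_div_two_add_countP_odd p
    obtain ⟨r, hr⟩ := even_countP_odd_of_isSymplectic hsymp
    rw [Multiset.sum_cons, Multiset.sum_add, pOne, sum_transpose, nStar, hr, ← hp.1, ← h1, hr]
    omega
  · rcases Multiset.mem_cons.mp h with h | h
    · omega
    · rcases Multiset.mem_add.mp h with h | h <;> exact zero_notMem_transpose _ h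

lemma isOrthogonal_qqm (q : Multiset ℕ) {m : ℕ} (hm : Odd m) : IsOrthogonal (qqm q m) := by
  intro a ha
  rw [qqm, if_neg (by rintro rfl; exact Nat.not_odd_zero hm), Multiset.count_cons,
    Multiset.count_add, if_neg (by rintro rfl; exact Nat.not_even_iff_odd.mpr hm ha), add_zero]
  exact ⟨q.count a, rfl⟩

end Partitions

open Partitions

/-- Theorem 4.2(2), case `G_n = SO_{2n+1}`: for a symplectic partition `p`
of `2n`, `[p₁ p₁ (2n*+1)]^{SO_{2n+1}} = ((p^t)^+)_{SO_{2n+1}}` if and only if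
`([p₁ p₁ (2n*+1)]^t)_{SO_{2n+1}} = (p^+)_{SO_{2n+1}}`. -/
theorem criterion_so_odd (n : ℕ) (hn : 1 ≤ n) (p : Multiset ℕ)
    (hp : IsPartitionOf (2 * n) p) (hsymp : IsSymplectic p) :
    orthExpansion (2 * n + 1) (qqm (pOne p) (2 * nStar p + 1)) =
        orthCollapse (2 * n + 1) (pPlus (transpose p)) ↔
      orthCollapse (2 * n + 1) (transpose (qqm (pOne p) (2 * nStar p + 1))) =
        orthCollapse (2 * n + 1) (pPlus p) := by
  set q := qqm (pOne p) (2 * nStar p + 1)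
  have hne : p ≠ 0 := fun h => by simp [h, IsPartitionOf] at hp; omega
  have hpt := isPartitionOf_transpose hp
  have hptne := transpose_ne_zero hp.2 hne
  have hkey := psum_orthCollapse_add_psum_orthCollapse_le hp hne hsymp
  have hdual := orthDual_orthCollapse_pPlus hp hne hkey
  have hdual' := orthDual_orthCollapse_pPlus hpt hptne fun k j => by
    rw [transpose_transpose hp.2]
    linarith [hkey j k, mul_comm j k]
  rw [transpose_transpose hp.2] at hdual'
  have hq := isPartitionOf_qqm hp hsymp
  have hqo := isOrthogonal_qqm (pOne p) (odd_two_mul_add_one (nStar p))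
  rw [orthExpansion_eq hq hqo]
  change orthDual _ (orthDual _ q) = _ ↔ orthDual _ q = _
  constructor
  · intro h
    rw [← orthDual_orthDual_orthDual hq hqo, h, hdual']
  · intro h
    rw [h, hdual]
end

section
/- Let p be a symplectic partition of 2n whose largest part is even and occurs with multiplicity 1, and all of whose other parts are odd (i.e., b_1 even with a_1 = 1, and b_i odd for 2 ≤ i ≤ r). Then ([p_1 p_1 (2n*+1)]^t)_{SO_{2n+1}} = (p^+)_{SO_{2n+1}}, and consequently [p_1 p_1 (2n*+1)]^{SO_{2n+1}} = ((p^t)^+)_{SO_{2n+1}}. (Theorem 4.2(2)(i) of the paper.) -/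
/-!
Write `p = [b m]` with `b` its even largest part. Then `p⁺ = [(b + 1) m]` has odd parts only, and
as the parts of `m` occur with even multiplicity, every column of its diagram has odd length. So
`r = (p⁺)ᵗ` and `rᵗ = p⁺` are orthogonal, `r` is special, and halving the odd parts of `p⁺` gives
`r = [p₁ p₁ (2n* + 1)]`; this yields the first identity and `r^{SO} = r`. Finally `r = [pᵗ 1]`
lies below `(pᵗ)⁺` with partial sums short by at most one, and an orthogonal partition between
them would, at its last excess over `r`, have a partial sum of the same parity as that of `r`.
So `r` is also the orthogonal collapse of `(pᵗ)⁺`.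
-/

/-- `colLen q j` is the length of column `j` (counted from `0`) and `rowLen q k` that of row `k`
(counted from `1`) of the Young diagram of `q`. -/
def colLen (q : Multiset ℕ) (j : ℕ) : ℕ := q.countP (fun a => j + 1 ≤ a)

def rowLen (q : Multiset ℕ) (k : ℕ) : ℕ :=
  ((Finset.range q.sum).filter (fun j => k ≤ colLen q j)).card

lemma colLen_antitone (q : Multiset ℕ) : Antitone (colLen q) := fun _ _ h => by
  simp only [colLen, Multiset.countP_eq_card_filter]
  exact Multiset.card_le_card (Multiset.monotone_filter_right q fun a ha => by omega)

lemma colLen_cons (a : ℕ) (s : Multiset ℕ) (j : ℕ) :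
    colLen (a ::ₘ s) j = colLen s j + if j < a then 1 else 0 :=
  Multiset.countP_cons _ _ _

lemma colLen_le_card (q : Multiset ℕ) (j : ℕ) : colLen q j ≤ Multiset.card q :=
  Multiset.countP_le_card _ _

lemma colLen_eq_zero {q : Multiset ℕ} {j : ℕ} (h : ∀ a ∈ q, a ≤ j) : colLen q j = 0 :=
  Multiset.countP_eq_zero.2 fun a ha => by have := h a ha; omega

lemma colLen_eq_zero_of_sum_le {q : Multiset ℕ} {j : ℕ} (h : q.sum ≤ j) : colLen q j = 0 :=
  colLen_eq_zero fun _ ha => (Multiset.le_sum_of_mem ha).trans h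

lemma lt_sum_of_colLen_pos {q : Multiset ℕ} {j : ℕ} (h : 0 < colLen q j) : j < q.sum := by
  by_contra! hj
  rw [colLen_eq_zero_of_sum_le hj] at h
  exact h.false

lemma colLen_eq_colLen_succ_add_count (q : Multiset ℕ) (j : ℕ) :
    colLen q j = colLen q (j + 1) + q.count (j + 1) := by
  induction q using Multiset.induction_on with
  | empty => simp [colLen]
  | cons a s ih =>
    rw [colLen_cons, colLen_cons, Multiset.count_cons, ih]
    split_ifs <;> omega

lemma sum_colLen {q : Multiset ℕ} {N : ℕ} (hN : q.sum ≤ N) :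
    ∑ j ∈ Finset.range N, colLen q j = q.sum := by
  induction q using Multiset.induction_on with
  | empty => simp [colLen]
  | cons a s ih =>
    rw [Multiset.sum_cons] at hN ⊢
    have hfilter : (Finset.range N).filter (· < a) = Finset.range a :=
      Finset.ext fun j => by simp only [Finset.mem_filter, Finset.mem_range]; omega
    simp only [colLen_cons, Finset.sum_add_distrib, Finset.sum_boole, Nat.cast_id, hfilter,
      Finset.card_range, ih (by omega), add_comm]

lemma psum_eq_sum_range {q : Multiset ℕ} {N : ℕ} (hN : q.sum ≤ N) (k : ℕ) :
    psum q k = ∑ j ∈ Finset.range N, min k (colLen q j) := by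
  refine Finset.sum_subset (Finset.range_subset_range.2 hN) fun j _ hj => ?_
  rw [show q.countP _ = colLen q j from rfl, colLen_eq_zero_of_sum_le (by simpa using hj),
    Nat.min_zero]

lemma psum_of_card_le {q : Multiset ℕ} {k : ℕ} (h : Multiset.card q ≤ k) : psum q k = q.sum := by
  conv_rhs => rw [← sum_colLen (q := q) le_rfl]
  rw [psum_eq_sum_range le_rfl]
  exact Finset.sum_congr rfl fun j _ => min_eq_right ((colLen_le_card q j).trans h)

lemma lt_rowLen_iff {q : Multiset ℕ} {j k : ℕ} (hk : 0 < k) : j < rowLen q k ↔ k ≤ colLen q j := by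
  constructor
  · intro h
    by_contra! hc
    have hsub : (Finset.range q.sum).filter (fun i => k ≤ colLen q i) ⊆ Finset.range j :=
      fun i hi => Finset.mem_range.2 <| by
        by_contra! hij
        exact (Finset.mem_filter.1 hi).2.not_gt ((colLen_antitone q hij).trans_lt hc)
    exact h.not_ge (by simpa [rowLen] using Finset.card_le_card hsub)
  · intro h
    have hsub : Finset.range (j + 1) ⊆ (Finset.range q.sum).filter (fun i => k ≤ colLen q i) :=
      fun i hi => by
        have hik : k ≤ colLen q i :=
          h.trans (colLen_antitone q (Nat.lt_succ_iff.1 (Finset.mem_range.1 hi)))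
        exact Finset.mem_filter.2 ⟨Finset.mem_range.2 (lt_sum_of_colLen_pos (by omega)), hik⟩
    simpa [rowLen] using Finset.card_le_card hsub

lemma rowLen_antitone (q : Multiset ℕ) : Antitone (rowLen q) := fun _ _ h =>
  Finset.card_le_card (Finset.monotone_filter_right _ fun _ _ hi => h.trans hi)

lemma rowLen_mem {q : Multiset ℕ} {k : ℕ} (hk : 0 < k) (h : 0 < rowLen q k) : rowLen q k ∈ q := by
  obtain ⟨u, hu⟩ := Nat.exists_eq_add_of_lt h
  have h1 : k ≤ colLen q u := (lt_rowLen_iff hk).1 (by omega)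
  have h2 : colLen q (u + 1) < k := by
    by_contra! hc
    have := (lt_rowLen_iff hk).2 hc
    omega
  have h3 := colLen_eq_colLen_succ_add_count q u
  rw [hu, zero_add, ← Multiset.count_pos]
  omega

lemma psum_eq_sum_rowLen (q : Multiset ℕ) (k : ℕ) :
    psum q k = ∑ i ∈ Finset.range k, rowLen q (i + 1) := by
  have hmin : ∀ x, min k x = ∑ i ∈ Finset.range k, if i < x then 1 else 0 := fun x => by
    rw [Finset.sum_boole, Nat.cast_id]
    have : (Finset.range k).filter (· < x) = Finset.range (min k x) :=
      Finset.ext fun i => by simp only [Finset.mem_filter, Finset.mem_range]; omega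
    rw [this, Finset.card_range]
  rw [psum_eq_sum_range le_rfl]
  simp only [hmin]
  rw [Finset.sum_comm]
  refine Finset.sum_congr rfl fun i _ => ?_
  rw [rowLen, Finset.card_filter]
  exact Finset.sum_congr rfl fun j _ => if_congr Nat.lt_iff_add_one_le rfl rfl

lemma psum_zero (q : Multiset ℕ) : psum q 0 = 0 := by
  simp [psum_eq_sum_rowLen]

lemma psum_succ (q : Multiset ℕ) (k : ℕ) : psum q (k + 1) = psum q k + rowLen q (k + 1) := by
  rw [psum_eq_sum_rowLen, psum_eq_sum_rowLen, Finset.sum_range_succ]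

lemma maxPart_eq_rowLen_one (q : Multiset ℕ) : maxPart q = rowLen q 1 := by
  simp [maxPart, psum_eq_sum_rowLen]

lemma transpose_eq_filter_map_range {q : Multiset ℕ} {N : ℕ} (hN : q.sum ≤ N) :
    transpose q = ((Multiset.range N).map (colLen q)).filter (0 < ·) := by
  obtain ⟨d, rfl⟩ := Nat.exists_eq_add_of_le hN
  have hzero : ((Multiset.range d).map fun i => colLen q (q.sum + i)).filter (0 < ·) = 0 :=
    Multiset.filter_eq_nil.2 fun x hx => by
      obtain ⟨i, -, rfl⟩ := Multiset.mem_map.1 hx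
      rw [colLen_eq_zero_of_sum_le (Nat.le_add_right _ _)]
      exact lt_irrefl 0
  rw [Multiset.range_add, Multiset.map_add, Multiset.filter_add, Multiset.map_map,
    Function.comp_def, hzero, add_zero]
  rfl

lemma zero_notMem_transpose (q : Multiset ℕ) : 0 ∉ transpose q := fun h =>
  lt_irrefl 0 (Multiset.mem_filter.1 h).2

lemma sum_transpose (q : Multiset ℕ) : (transpose q).sum = q.sum := by
  set cols := (Multiset.range q.sum).map (colLen q)
  have hzero : (cols.filter fun x => ¬ 0 < x).sum = 0 :=
    Multiset.sum_eq_zero fun x hx => by have := (Multiset.mem_filter.1 hx).2; omega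
  calc (transpose q).sum
      = (cols.filter (0 < ·)).sum + (cols.filter fun x => ¬ 0 < x).sum := by
        rw [hzero, add_zero, transpose_eq_filter_map_range le_rfl]
    _ = ∑ j ∈ Finset.range q.sum, colLen q j := Multiset.sum_filter_add_sum_filter_not _
    _ = q.sum := sum_colLen le_rfl

lemma colLen_transpose (q : Multiset ℕ) (j : ℕ) : colLen (transpose q) j = rowLen q (j + 1) := by
  rw [transpose_eq_filter_map_range le_rfl, colLen, Multiset.countP_filter,
    Multiset.countP_map, rowLen, Finset.card_def, Finset.filter_val]
  exact congrArg Multiset.card (Multiset.filter_congr fun i _ => by omega)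

lemma rowLen_transpose (q : Multiset ℕ) (k : ℕ) : rowLen (transpose q) (k + 1) = colLen q k :=
  eq_of_forall_lt_iff fun i => by
    rw [lt_rowLen_iff k.succ_pos, colLen_transpose, Nat.succ_le_iff, lt_rowLen_iff i.succ_pos,
      Nat.succ_le_iff]

lemma count_transpose_add_rowLen (q : Multiset ℕ) (v : ℕ) :
    (transpose q).count (v + 1) + rowLen q (v + 1 + 1) = rowLen q (v + 1) := by
  have := colLen_eq_colLen_succ_add_count (transpose q) v
  rw [colLen_transpose, colLen_transpose] at this
  omega

lemma transpose_transpose {q : Multiset ℕ} (h0 : 0 ∉ q) : transpose (transpose q) = q := by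
  ext v
  rcases v with _ | v
  · rw [Multiset.count_eq_zero_of_notMem (zero_notMem_transpose _),
      Multiset.count_eq_zero_of_notMem h0]
  · have := count_transpose_add_rowLen (transpose q) v
    rw [rowLen_transpose, rowLen_transpose, colLen_eq_colLen_succ_add_count q v] at this
    omega

lemma domLE_antisymm {q₁ q₂ : Multiset ℕ} (h₁ : 0 ∉ q₁) (h₂ : 0 ∉ q₂) (h : DomLE q₁ q₂)
    (h' : DomLE q₂ q₁) : q₁ = q₂ := by
  have hrow : ∀ k, rowLen q₁ (k + 1) = rowLen q₂ (k + 1) := fun k => by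
    have := psum_succ q₁ k
    have := psum_succ q₂ k
    have := le_antisymm (h k) (h' k)
    have := le_antisymm (h (k + 1)) (h' (k + 1))
    omega
  have htr : transpose q₁ = transpose q₂ := by
    ext v
    rcases v with _ | v
    · simp only [Multiset.count_eq_zero_of_notMem (zero_notMem_transpose _)]
    · have := count_transpose_add_rowLen q₁ v
      have := count_transpose_add_rowLen q₂ v
      rw [hrow, hrow] at *
      omega
  rw [← transpose_transpose h₁, htr, transpose_transpose h₂]

lemma collapseOf_eq {P : Multiset ℕ → Prop} {N : ℕ} {p q : Multiset ℕ}
    (h : IsCollapseOf P N p q) : collapseOf P N p = q := by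
  have hex : ∃ q, IsCollapseOf P N p q := ⟨q, h⟩
  have hc := hex.choose_spec
  rw [collapseOf, dif_pos hex]
  exact domLE_antisymm hc.1.2 h.1.2 (h.2.2.2 _ hc.1 hc.2.1 hc.2.2.1)
    (hc.2.2.2 q h.1 h.2.1 h.2.2.1)

lemma expansionOf_eq {P Sp : Multiset ℕ → Prop} {N : ℕ} {p q : Multiset ℕ}
    (h : IsExpansionOf P Sp N p q) : expansionOf P Sp N p = q := by
  have hex : ∃ q, IsExpansionOf P Sp N p q := ⟨q, h⟩
  have hc := hex.choose_spec
  rw [expansionOf, dif_pos hex]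
  exact domLE_antisymm hc.1.2 h.1.2 (hc.2.2.2.2 q h.1 h.2.1 h.2.2.1 h.2.2.2.1)
    (h.2.2.2.2 _ hc.1 hc.2.1 hc.2.2.1 hc.2.2.2.1)

lemma isCollapseOf_self {P : Multiset ℕ → Prop} {N : ℕ} {q : Multiset ℕ}
    (hq : IsPartitionOf N q) (hP : P q) : IsCollapseOf P N q q :=
  ⟨hq, hP, fun _ => le_rfl, fun _ _ _ h => h⟩

lemma isExpansionOf_self {P Sp : Multiset ℕ → Prop} {N : ℕ} {q : Multiset ℕ}
    (hq : IsPartitionOf N q) (hP : P q) (hSp : Sp q) : IsExpansionOf P Sp N q q :=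
  ⟨hq, hP, hSp, fun _ => le_rfl, fun _ _ _ _ h => h⟩

lemma isOrthogonal_of_forall_odd {q : Multiset ℕ} (h : ∀ a ∈ q, Odd a) : IsOrthogonal q :=
  fun a ha => by
    rw [Multiset.count_eq_zero_of_notMem fun hmem => Nat.not_odd_iff_even.2 ha (h a hmem)]
    exact Even.zero

lemma isSpecialOrth_of_isOrthogonal_transpose {N : ℕ} {q : Multiset ℕ} (hq : IsPartitionOf N q)
    (ho : IsOrthogonal q) (hot : IsOrthogonal (transpose q)) : IsSpecialOrth N q := by
  have hqt : IsPartitionOf N (transpose q) :=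
    ⟨(sum_transpose q).trans hq.1, zero_notMem_transpose q⟩
  rw [IsSpecialOrth, orthCollapse, orthCollapse, collapseOf_eq (isCollapseOf_self hqt hot),
    transpose_transpose hq.2]
  exact collapseOf_eq (isCollapseOf_self hq ho)

lemma even_countP_of_even_count {s : Multiset ℕ} {P : ℕ → Prop} [DecidablePred P]
    (h : ∀ a, P a → Even (s.count a)) : Even (s.countP P) := by
  rw [Multiset.countP_eq_card_filter, ← Multiset.toFinset_sum_count_eq]
  refine Finset.even_sum _ fun a _ => ?_
  rw [Multiset.count_filter]
  split_ifs with hPa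
  · exact h a hPa
  · exact Even.zero

lemma sum_mod_two_eq_countP_odd (s : Multiset ℕ) : s.sum % 2 = s.countP (Odd ·) % 2 := by
  induction s using Multiset.induction_on with
  | empty => simp
  | cons a t ih =>
    rw [Multiset.sum_cons, Multiset.countP_cons]
    rcases Nat.even_or_odd a with ⟨x, hx⟩ | hodd
    · rw [if_neg (by simp [Nat.not_odd_iff_even, hx])]
      omega
    · obtain ⟨x, hx⟩ := hodd
      rw [if_pos ⟨x, hx⟩]
      omega

lemma IsOrthogonal.sum_mod_two {s : Multiset ℕ} (h : IsOrthogonal s) :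
    s.sum % 2 = Multiset.card s % 2 := by
  obtain ⟨e, he⟩ : Even (s.countP fun a => ¬ Odd a) :=
    even_countP_of_even_count fun a ha => h a (Nat.not_odd_iff_even.1 ha)
  rw [sum_mod_two_eq_countP_odd, Multiset.card_eq_countP_add_countP (Odd ·)]
  omega

lemma psum_eq_sum_filter {q : Multiset ℕ} {j k : ℕ} (h : colLen q j = k) :
    psum q k = (q.filter (j + 1 ≤ ·)).sum := by
  set top := q.filter (j + 1 ≤ ·)
  have htop : top.sum ≤ q.sum := by
    rw [← Multiset.sum_filter_add_sum_filter_not (j + 1 ≤ ·) (s := q)]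
    exact Nat.le_add_right _ _
  rw [psum_eq_sum_range le_rfl, ← sum_colLen htop]
  refine Finset.sum_congr rfl fun i _ => ?_
  have hcol : colLen top i = q.countP fun a => i + 1 ≤ a ∧ j + 1 ≤ a := Multiset.countP_filter ..
  rcases Nat.lt_or_ge i j with hij | hij
  · rw [hcol, Multiset.countP_congr rfl fun a _ =>
      propext (show i + 1 ≤ a ∧ j + 1 ≤ a ↔ j + 1 ≤ a by omega)]
    exact (min_eq_left (h ▸ colLen_antitone q hij.le)).trans h.symm
  · rw [hcol, Multiset.countP_congr rfl fun a _ =>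
      propext (show i + 1 ≤ a ∧ j + 1 ≤ a ↔ i + 1 ≤ a by omega)]
    exact min_eq_right (h ▸ colLen_antitone q hij)

lemma psum_mod_two_of_isOrthogonal {q : Multiset ℕ} {l : ℕ} (hq : IsOrthogonal q)
    (hl : rowLen q (l + 1) < rowLen q l) : psum q l % 2 = l % 2 := by
  rcases Nat.eq_zero_or_pos l with rfl | hl0
  · rw [psum_zero]
  obtain ⟨u, hu⟩ := Nat.exists_eq_add_of_lt hl
  have hcol : colLen q (rowLen q (l + 1) + u) = l := by
    have h1 := (lt_rowLen_iff hl0).1 (show rowLen q (l + 1) + u < rowLen q l by omega)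
    have h2 := mt (lt_rowLen_iff (q := q) (j := rowLen q (l + 1) + u) (k := l + 1) (by omega)).2 (by omega)
    omega
  have htop : IsOrthogonal (q.filter (rowLen q (l + 1) + u + 1 ≤ ·)) := fun a ha => by
    rw [Multiset.count_filter]
    split_ifs
    exacts [hq a ha, Even.zero]
  rw [psum_eq_sum_filter hcol, htop.sum_mod_two, ← Multiset.countP_eq_card_filter]
  exact congrArg (· % 2) hcol

lemma psum_mod_two_of_forall_odd {r : Multiset ℕ} {l : ℕ} (hr : ∀ a ∈ r, Odd a)
    (hl : 0 < rowLen r l) : psum r l % 2 = l % 2 := by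
  induction l with
  | zero => rw [psum_zero]
  | succ l ih =>
    have := ih (hl.trans_le (rowLen_antitone r l.le_succ))
    obtain ⟨t, ht⟩ := hr _ (rowLen_mem (k := l + 1) (by omega) hl)
    rw [psum_succ]
    omega

lemma exists_last_excess {f g : ℕ → ℕ} {k₀ B : ℕ} (hk₀ : f k₀ = g k₀ + 1)
    (hB : ∀ k ≥ B, f k = g k) : ∃ l, f l = g l + 1 ∧ f (l + 1) ≠ g (l + 1) + 1 := by
  by_contra! hstep
  have hall : ∀ i, f (k₀ + i) = g (k₀ + i) + 1 := fun i => by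
    induction i with
    | zero => exact hk₀
    | succ i ih => exact hstep _ ih
  have := hB (k₀ + B) (Nat.le_add_left _ _)
  have := hall B
  omega

/-- At the last `k` with `psum r k < psum q k`, both partial sums would have the parity of `k`. -/
lemma domLE_of_psum_le_add_one {q r : Multiset ℕ} (hq : IsOrthogonal q) (hr : ∀ a ∈ r, Odd a)
    (hsum : q.sum = r.sum) (hle : ∀ k, psum q k ≤ psum r k + 1) : DomLE q r := by
  intro k₀
  by_contra! hk₀
  obtain ⟨l, hl, hl1⟩ := exists_last_excess (f := psum q) (g := psum r) (k₀ := k₀)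
    (B := Multiset.card q + Multiset.card r) (by have := hle k₀; omega) fun k hk => by
      rw [psum_of_card_le (by omega), psum_of_card_le (by omega), hsum]
  obtain ⟨l, rfl⟩ : ∃ l', l = l' + 1 := Nat.exists_eq_add_one.2 <| Nat.pos_of_ne_zero <| by
    rintro rfl
    simp [psum_zero] at hl
  have := psum_succ q l
  have := psum_succ r l
  have := psum_succ q (l + 1)
  have := psum_succ r (l + 1)
  have := hle l
  have := hle (l + 1 + 1)
  have := rowLen_antitone r (show l + 1 ≤ l + 1 + 1 by omega)
  have hq2 := psum_mod_two_of_isOrthogonal (l := l + 1) hq (by omega)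
  have hr2 := psum_mod_two_of_forall_odd (l := l + 1) hr (by omega)
  omega

lemma le_maxPart {q : Multiset ℕ} {a : ℕ} (h : a ∈ q) : a ≤ maxPart q := by
  rcases Nat.eq_zero_or_pos a with rfl | ha
  · exact Nat.zero_le _
  have : a - 1 < rowLen q 1 :=
    (lt_rowLen_iff one_pos).2 (Multiset.countP_pos.2 ⟨a, h, by omega⟩)
  rw [maxPart_eq_rowLen_one]
  omega

lemma maxPart_mem {q : Multiset ℕ} (hq : q ≠ 0) (h0 : 0 ∉ q) : maxPart q ∈ q := by
  obtain ⟨a, ha⟩ := Multiset.exists_mem_of_ne_zero hq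
  have := le_maxPart ha
  have : a ≠ 0 := ne_of_mem_of_not_mem ha h0
  rw [maxPart_eq_rowLen_one] at *
  exact rowLen_mem one_pos (by omega)

lemma colLen_maxPart (q : Multiset ℕ) : colLen q (maxPart q) = 0 :=
  colLen_eq_zero fun _ => le_maxPart

lemma sum_pPlus {q : Multiset ℕ} (hb : maxPart q ∈ q) : (pPlus q).sum = q.sum + 1 := by
  have := congrArg Multiset.sum (Multiset.cons_erase hb)
  rw [Multiset.sum_cons] at this
  rw [pPlus, Multiset.sum_cons]
  omega

lemma colLen_pPlus {q : Multiset ℕ} (hb : maxPart q ∈ q) (j : ℕ) :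
    colLen (pPlus q) j = colLen q j + if j = maxPart q then 1 else 0 := by
  have hq : colLen q j = colLen (q.erase (maxPart q)) j + if j < maxPart q then 1 else 0 := by
    rw [← colLen_cons, Multiset.cons_erase hb]
  rw [pPlus, colLen_cons, hq]
  split_ifs <;> omega

lemma psum_of_colLen_eq_add_single {q q' : Multiset ℕ} {x : ℕ}
    (h : ∀ j, colLen q' j = colLen q j + if j = x then 1 else 0) (k : ℕ) :
    psum q' k = psum q k + if colLen q x < k then 1 else 0 := by
  have hx : x ∈ Finset.range (q.sum + q'.sum) :=
    Finset.mem_range.2 <| by have := lt_sum_of_colLen_pos (q := q') (j := x) (by simp [h]); omega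
  rw [psum_eq_sum_range (N := q.sum + q'.sum) (by omega),
    psum_eq_sum_range (N := q.sum + q'.sum) (by omega), ← Finset.add_sum_erase _ _ hx,
    ← Finset.add_sum_erase _ _ hx, h, if_pos rfl]
  rw [Finset.sum_congr rfl fun j hj => by rw [h, if_neg (Finset.ne_of_mem_erase hj), add_zero]]
  split_ifs <;> omega

lemma transpose_of_colLen_eq_add_single {q q' : Multiset ℕ} {x : ℕ}
    (h : ∀ j, colLen q' j = colLen q j + if j = x then 1 else 0) (hx : colLen q x = 0) :
    transpose q' = 1 ::ₘ transpose q := by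
  set N := q.sum + q'.sum
  have hxN : x ∈ Multiset.range N :=
    Multiset.mem_range.2 <| by have := lt_sum_of_colLen_pos (q := q') (j := x) (by simp [h]); omega
  have hrest : ((Multiset.range N).erase x).map (colLen q') =
      ((Multiset.range N).erase x).map (colLen q) :=
    Multiset.map_congr rfl fun j hj => by
      rw [h, if_neg ((Multiset.nodup_range N).mem_erase_iff.1 hj).1, add_zero]
  rw [transpose_eq_filter_map_range (N := N) (by omega),
    transpose_eq_filter_map_range (N := N) (by omega), ← Multiset.cons_erase hxN,
    Multiset.map_cons, Multiset.map_cons, hrest, h, if_pos rfl, hx, zero_add,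
    Multiset.filter_cons_of_pos _ one_pos, Multiset.filter_cons_of_neg _ (lt_irrefl 0)]

lemma transpose_pPlus {q : Multiset ℕ} (hb : maxPart q ∈ q) :
    transpose (pPlus q) = 1 ::ₘ transpose q :=
  transpose_of_colLen_eq_add_single (colLen_pPlus hb) (colLen_maxPart q)

lemma isCollapseOf_pPlus {w : Multiset ℕ} (hodd : ∀ a ∈ 1 ::ₘ w, Odd a) :
    IsCollapseOf IsOrthogonal (w.sum + 1) (pPlus w) (1 ::ₘ w) := by
  have hpart : IsPartitionOf (w.sum + 1) (1 ::ₘ w) :=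
    ⟨by rw [Multiset.sum_cons, add_comm], fun h => Nat.not_odd_zero (hodd 0 h)⟩
  rcases eq_or_ne w 0 with rfl | hw
  · exact isCollapseOf_self hpart (isOrthogonal_of_forall_odd hodd)
  have hb : maxPart w ∈ w :=
    maxPart_mem hw fun h => Nat.not_odd_zero (hodd 0 (Multiset.mem_cons_of_mem h))
  have hcons := psum_of_colLen_eq_add_single (q := w) (q' := 1 ::ₘ w) (x := 0) fun j => by
    rw [colLen_cons]
    simp only [Nat.lt_one_iff]
  have hplus := psum_of_colLen_eq_add_single (colLen_pPlus hb)
  rw [colLen_maxPart] at hplus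
  refine ⟨hpart, isOrthogonal_of_forall_odd hodd, fun k => ?_, fun q hq hqo hqle => ?_⟩
  · rw [hcons, hplus]
    split_ifs <;> omega
  · refine domLE_of_psum_le_add_one hqo hodd (hq.1.trans hpart.1.symm) fun k => ?_
    have := hqle k
    rw [hcons, hplus] at *
    split_ifs at * <;> omega

lemma Multiset.range_two_mul_add_one (N : ℕ) :
    Multiset.range (2 * N + 1) = 0 ::ₘ ((Multiset.range N).map (2 * · + 1) +
      (Multiset.range N).map (2 * · + 2)) := by
  induction N with
  | zero => rfl
  | succ N ih =>
    rw [show 2 * (N + 1) + 1 = 2 * N + 1 + 1 + 1 by ring, Multiset.range_succ,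
      Multiset.range_succ, ih, Multiset.range_succ, Multiset.map_cons, Multiset.map_cons]
    ext a
    simp only [Multiset.count_cons, Multiset.count_add]
    omega

/-- Columns `2j + 1` and `2j + 2` of the diagram of `q` both have the length of column `j` of
the diagram of `⌊q/2⌋`. -/
lemma transpose_eq_qqm_of_forall_odd {q : Multiset ℕ} (h : ∀ a ∈ q, Odd a) :
    transpose q = qqm (pOne q) (Multiset.card q) := by
  set half := q.map (· / 2)
  have hodd_col : ∀ j, colLen q (2 * j + 1) = colLen half j := fun j => by
    simp only [colLen, half, Multiset.countP_map, ← Multiset.countP_eq_card_filter]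
    refine Multiset.countP_congr rfl fun a ha => propext ?_
    obtain ⟨t, rfl⟩ := h a ha
    omega
  have heven_col : ∀ j, colLen q (2 * j + 2) = colLen half j := fun j => by
    rw [← hodd_col]
    refine Multiset.countP_congr rfl fun a ha => propext ?_
    obtain ⟨t, rfl⟩ := h a ha
    omega
  have hzero_col : colLen q 0 = Multiset.card q :=
    Multiset.countP_eq_card.2 fun a ha => (h a ha).pos
  have hhalf : half.sum ≤ q.sum := by
    simpa using Multiset.sum_map_le_sum_map (s := q) (· / 2) id fun a _ => Nat.div_le_self a 2
  rw [transpose_eq_filter_map_range (N := 2 * q.sum + 1) (by omega),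
    Multiset.range_two_mul_add_one, Multiset.map_cons, Multiset.map_add, Multiset.map_map,
    Multiset.map_map, Function.comp_def, Function.comp_def]
  simp only [hodd_col, heven_col, hzero_col]
  rw [pOne, transpose_eq_filter_map_range hhalf, qqm]
  split_ifs with hcard
  · rw [Multiset.filter_cons_of_neg _ (by omega), Multiset.filter_add]
  · rw [Multiset.filter_cons_of_pos _ (by omega), Multiset.filter_add]

lemma forall_odd_transpose_cons {c : ℕ} {m : Multiset ℕ} (hm : ∀ a, Even (m.count a))
    (hle : ∀ a ∈ m, a ≤ c) : ∀ a ∈ transpose (c ::ₘ m), Odd a := by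
  intro a ha
  rw [transpose_eq_filter_map_range le_rfl, Multiset.mem_filter, Multiset.mem_map] at ha
  obtain ⟨⟨j, -, rfl⟩, hpos⟩ := ha
  obtain ⟨e, he⟩ := even_countP_of_even_count (s := m) (P := (j + 1 ≤ ·)) fun a _ => hm a
  rw [colLen_cons] at hpos ⊢
  split_ifs at hpos ⊢ with hj
  · exact ⟨e, by rw [colLen, he]; ring⟩
  · rw [colLen_eq_zero fun a ha => (hle a ha).trans (by omega)] at hpos
    exact absurd hpos (lt_irrefl 0)

lemma forall_odd_pPlus {p : Multiset ℕ} (hmax_even : Even (maxPart p))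
    (hmax_mult : p.count (maxPart p) = 1) (hodd : ∀ a ∈ p, a ≠ maxPart p → Odd a) :
    ∀ a ∈ pPlus p, Odd a := by
  intro a ha
  rcases Multiset.mem_cons.1 ha with rfl | ha
  · exact hmax_even.add_one
  · refine hodd a (Multiset.mem_of_mem_erase ha) fun hab => ?_
    rw [hab, ← Multiset.count_pos, Multiset.count_erase_self, hmax_mult] at ha
    exact lt_irrefl 0 ha

lemma forall_odd_transpose_pPlus {p : Multiset ℕ} (hsymp : IsSymplectic p)
    (hmax_even : Even (maxPart p)) (hmax_mult : p.count (maxPart p) = 1)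
    (hodd : ∀ a ∈ p, a ≠ maxPart p → Odd a) : ∀ a ∈ transpose (pPlus p), Odd a := by
  have herase_odd : ∀ a ∈ p.erase (maxPart p), Odd a := fun a ha =>
    forall_odd_pPlus hmax_even hmax_mult hodd a (Multiset.mem_cons_of_mem ha)
  refine forall_odd_transpose_cons (fun a => ?_) fun a ha =>
    (le_maxPart (Multiset.mem_of_mem_erase ha)).trans (Nat.le_succ _)
  by_cases ha : a ∈ p.erase (maxPart p)
  · have hne : a ≠ maxPart p := fun h => Nat.not_odd_iff_even.2 hmax_even (h ▸ herase_odd a ha)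
    rw [Multiset.count_erase_of_ne hne]
    exact hsymp a (herase_odd a ha)
  · rw [Multiset.count_eq_zero_of_notMem ha]
    exact Even.zero

lemma two_mul_nStar_add_one {p : Multiset ℕ} (hsymp : IsSymplectic p)
    (hmax_even : Even (maxPart p)) (hmax_mult : p.count (maxPart p) = 1)
    (hodd : ∀ a ∈ p, a ≠ maxPart p → Odd a) : 2 * nStar p + 1 = Multiset.card p := by
  have heven : ∀ a ∈ p, (¬ Odd a) = (maxPart p = a) := fun a ha => propext
    ⟨fun h => by_contra fun hne => h (hodd a ha (Ne.symm hne)),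
      fun h => h ▸ Nat.not_odd_iff_even.2 hmax_even⟩
  obtain ⟨e, he⟩ := even_countP_of_even_count hsymp
  rw [Multiset.card_eq_countP_add_countP (Odd ·), Multiset.countP_congr rfl heven,
    ← Multiset.count, hmax_mult, nStar, he]
  omega

lemma pOne_pPlus {p : Multiset ℕ} (hb : maxPart p ∈ p) (hmax_even : Even (maxPart p)) :
    pOne (pPlus p) = pOne p := by
  obtain ⟨t, ht⟩ := hmax_even
  conv_rhs => rw [pOne, ← Multiset.cons_erase hb]
  rw [pOne, pPlus, Multiset.map_cons, Multiset.map_cons,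
    show (maxPart p + 1) / 2 = maxPart p / 2 by omega]

lemma qqm_pOne_eq_transpose_pPlus {p : Multiset ℕ} (hsymp : IsSymplectic p)
    (hmax_even : Even (maxPart p)) (hmax_mult : p.count (maxPart p) = 1)
    (hodd : ∀ a ∈ p, a ≠ maxPart p → Odd a) :
    qqm (pOne p) (2 * nStar p + 1) = transpose (pPlus p) := by
  have hb : maxPart p ∈ p := Multiset.count_pos.1 (by omega)
  rw [transpose_eq_qqm_of_forall_odd (forall_odd_pPlus hmax_even hmax_mult hodd),
    pOne_pPlus hb hmax_even, two_mul_nStar_add_one hsymp hmax_even hmax_mult hodd, pPlus,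
    Multiset.card_cons, Multiset.card_erase_add_one hb]

theorem criterion_so_odd_case_i_general (n : ℕ) (p : Multiset ℕ)
    (hp : IsPartitionOf (2 * n) p) (hsymp : IsSymplectic p)
    (hmax_even : Even (maxPart p)) (hmax_mult : p.count (maxPart p) = 1)
    (hodd : ∀ a ∈ p, a ≠ maxPart p → Odd a) :
    orthCollapse (2 * n + 1) (transpose (qqm (pOne p) (2 * nStar p + 1))) =
        orthCollapse (2 * n + 1) (pPlus p) ∧
      orthExpansion (2 * n + 1) (qqm (pOne p) (2 * nStar p + 1)) =
        orthCollapse (2 * n + 1) (pPlus (transpose p)) := by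
  have hb : maxPart p ∈ p := Multiset.count_pos.1 (by omega)
  have hplus_odd := forall_odd_pPlus hmax_even hmax_mult hodd
  have hplus_zero : 0 ∉ pPlus p := fun h => Nat.not_odd_zero (hplus_odd 0 h)
  have hr_odd := forall_odd_transpose_pPlus hsymp hmax_even hmax_mult hodd
  have hr_orth := isOrthogonal_of_forall_odd hr_odd
  have hr_part : IsPartitionOf (2 * n + 1) (transpose (pPlus p)) :=
    ⟨by rw [sum_transpose, sum_pPlus hb, hp.1], zero_notMem_transpose _⟩
  have hr_special : IsSpecialOrth (2 * n + 1) (transpose (pPlus p)) := by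
    refine isSpecialOrth_of_isOrthogonal_transpose hr_part hr_orth ?_
    rw [transpose_transpose hplus_zero]
    exact isOrthogonal_of_forall_odd hplus_odd
  have hcollapse : IsCollapseOf IsOrthogonal (2 * n + 1) (pPlus (transpose p))
      (transpose (pPlus p)) := by
    have := isCollapseOf_pPlus (w := transpose p) (transpose_pPlus hb ▸ hr_odd)
    rwa [sum_transpose, hp.1, ← transpose_pPlus hb] at this
  rw [qqm_pOne_eq_transpose_pPlus hsymp hmax_even hmax_mult hodd, transpose_transpose hplus_zero]
  refine ⟨rfl, ?_⟩
  rw [orthExpansion, orthCollapse, collapseOf_eq hcollapse,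
    expansionOf_eq (isExpansionOf_self hr_part hr_orth hr_special)]

/-- Theorem 4.2(2)(i): let `p` be a symplectic partition of `2n` whose
largest part is even and occurs with multiplicity `1`, all of whose other parts are odd.
Then `([p₁ p₁ (2n*+1)]^t)_{SO_{2n+1}} = (p^+)_{SO_{2n+1}}`, and consequently
`[p₁ p₁ (2n*+1)]^{SO_{2n+1}} = ((p^t)^+)_{SO_{2n+1}}`. -/
theorem criterion_so_odd_case_i (n : ℕ) (hn : 1 ≤ n) (p : Multiset ℕ)
    (hp : IsPartitionOf (2 * n) p) (hsymp : IsSymplectic p)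
    (hmax_even : Even (maxPart p)) (hmax_mult : p.count (maxPart p) = 1)
    (hodd : ∀ a ∈ p, a ≠ maxPart p → Odd a) :
    orthCollapse (2 * n + 1) (transpose (qqm (pOne p) (2 * nStar p + 1))) =
        orthCollapse (2 * n + 1) (pPlus p) ∧
      orthExpansion (2 * n + 1) (qqm (pOne p) (2 * nStar p + 1)) =
        orthCollapse (2 * n + 1) (pPlus (transpose p)) :=
  criterion_so_odd_case_i_general n p hp hsymp hmax_even hmax_mult hodd
end
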